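/- arXiv:1205.5360 — 7 statements merged into one kernel-verified Lean document; each statement's English description precedes it below -/
import Mathlib

section
/- Let T : ℝ → ℝ be defined by T(x) = x + 2 if x ≤ 0 and T(x) = 2 − 2x if x > 0 (the case s = 2, β = 2). Let μ be the measure on ℝ with density ρ with respect to Lebesgue measure, where ρ(x) = 1/6 for x ∈ (−2, 0), ρ(x) = 1/3 for x ∈ (0, 2), and ρ(x) = 0 otherwise. Then μ is a probability measure, μ is T-invariant (the pushforward of μ under T equals μ), and μ((0, 2)) = 2/3. -/
open MeasureTheory Set

theorem invariant_density_s_two_beta_two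
    (T : ℝ → ℝ) (hT : T = fun x => if x ≤ 0 then x + 2 else 2 - 2 * x)
    (ρ : ℝ → ENNReal)
    (hρ : ρ = fun x =>
      if x ∈ Ioo (-2 : ℝ) 0 then ENNReal.ofReal (1 / 6)
      else if x ∈ Ioo (0 : ℝ) 2 then ENNReal.ofReal (1 / 3)
      else 0)
    (μ : Measure ℝ) (hμ : μ = volume.withDensity ρ) :
    IsProbabilityMeasure μ ∧ μ.map T = μ ∧ μ (Ioo (0 : ℝ) 2) = ENNReal.ofReal (2 / 3) := by
  have hρ' : ρ = fun x => (Ioo (-2:ℝ) 0).indicator (fun _ => ENNReal.ofReal (1/6)) x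
      + (Ioo (0:ℝ) 2).indicator (fun _ => ENNReal.ofReal (1/3)) x := by
    funext x
    simp only [hρ]
    by_cases h1 : x ∈ Ioo (-2:ℝ) 0
    · have h2 : x ∉ Ioo (0:ℝ) 2 := by
        intro h2
        exact absurd h1.2 (not_lt.2 h2.1.le)
      rw [if_pos h1, indicator_of_mem h1, indicator_of_notMem h2, add_zero]
    · rw [if_neg h1, indicator_of_notMem h1, zero_add]
      by_cases h2 : x ∈ Ioo (0:ℝ) 2
      · rw [if_pos h2, indicator_of_mem h2]
      · rw [if_neg h2, indicator_of_notMem h2]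
  have key : ∀ S : Set ℝ, MeasurableSet S → μ S =
      ENNReal.ofReal (1/6) * volume (Ioo (-2:ℝ) 0 ∩ S)
      + ENNReal.ofReal (1/3) * volume (Ioo (0:ℝ) 2 ∩ S) := by
    intro S hS
    rw [hμ, withDensity_apply _ hS, hρ',
      lintegral_add_left (measurable_const.indicator measurableSet_Ioo),
      lintegral_indicator measurableSet_Ioo, lintegral_indicator measurableSet_Ioo,
      setLIntegral_const, setLIntegral_const,
      Measure.restrict_apply measurableSet_Ioo, Measure.restrict_apply measurableSet_Ioo]
  have hmeas : Measurable T := by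
    rw [hT]
    exact Measurable.ite measurableSet_Iic (by fun_prop) (by fun_prop)
  have hprob : IsProbabilityMeasure μ := by
    constructor
    rw [key univ MeasurableSet.univ, inter_univ, inter_univ, Real.volume_Ioo, Real.volume_Ioo,
      ← ENNReal.ofReal_mul (by norm_num), ← ENNReal.ofReal_mul (by norm_num),
      ← ENNReal.ofReal_add (by norm_num) (by norm_num)]
    norm_num
  refine ⟨hprob, ?_, ?_⟩
  · haveI := hprob
    haveI : IsProbabilityMeasure (μ.map T) := Measure.isProbabilityMeasure_map hmeas.aemeasurable
    refine Measure.ext_of_Iic (μ.map T) μ (fun t => ?_)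
    rw [Measure.map_apply hmeas measurableSet_Iic, key _ (hmeas measurableSet_Iic),
      key _ measurableSet_Iic]
    rcases lt_or_ge t 2 with h2 | h2
    · have hS1 : Ioo (-2:ℝ) 0 ∩ T ⁻¹' Iic t = Ioc (-2) (t-2) := by
        ext x
        simp only [hT, mem_inter_iff, mem_preimage, mem_Iic, mem_Ioo, mem_Ioc]
        constructor
        · rintro ⟨⟨ha, hb⟩, hc⟩
          rw [if_pos hb.le] at hc
          exact ⟨ha, by linarith⟩
        · rintro ⟨ha, hb⟩
          have hx : x ≤ 0 := by linarith
          refine ⟨⟨ha, by linarith⟩, ?_⟩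
          rw [if_pos hx]; linarith
      have hS2 : Ioo (0:ℝ) 2 ∩ T ⁻¹' Iic t = Ico ((2-t)/2) 2 := by
        ext x
        simp only [hT, mem_inter_iff, mem_preimage, mem_Iic, mem_Ioo, mem_Ico]
        constructor
        · rintro ⟨⟨ha, hb⟩, hc⟩
          rw [if_neg (not_le.2 ha)] at hc
          exact ⟨by linarith, hb⟩
        · rintro ⟨ha, hb⟩
          have hx : (0:ℝ) < x := by linarith
          refine ⟨⟨hx, hb⟩, ?_⟩
          rw [if_neg (not_le.2 hx)]; linarith
      rw [hS1, hS2, Real.volume_Ioc, Real.volume_Ico]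
      rcases lt_or_ge t 0 with h0 | h0
      · have hR1 : Ioo (-2:ℝ) 0 ∩ Iic t = Ioc (-2) t := by
          ext x
          simp only [mem_inter_iff, mem_Ioo, mem_Iic, mem_Ioc]
          constructor
          · rintro ⟨⟨ha, hb⟩, hc⟩; exact ⟨ha, hc⟩
          · rintro ⟨ha, hb⟩; exact ⟨⟨ha, by linarith⟩, hb⟩
        have hR2 : Ioo (0:ℝ) 2 ∩ Iic t = ∅ := by
          ext x
          simp only [mem_inter_iff, mem_Ioo, mem_Iic, mem_empty_iff_false, iff_false]
          rintro ⟨⟨ha, hb⟩, hc⟩; linarith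
        rw [hR1, hR2, Real.volume_Ioc, measure_empty, mul_zero, add_zero]
        have hz : ENNReal.ofReal (t - 2 - -2) = 0 := by
          rw [ENNReal.ofReal_eq_zero]; linarith
        rw [hz, mul_zero, zero_add, ← ENNReal.ofReal_mul (by norm_num),
          ← ENNReal.ofReal_mul (by norm_num)]
        congr 1; ring
      · have hR1 : Ioo (-2:ℝ) 0 ∩ Iic t = Ioo (-2) 0 := by
          apply inter_eq_left.2
          intro x hx; exact le_trans hx.2.le h0
        have hR2 : Ioo (0:ℝ) 2 ∩ Iic t = Ioc 0 t := by
          ext x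
          simp only [mem_inter_iff, mem_Ioo, mem_Iic, mem_Ioc]
          constructor
          · rintro ⟨⟨ha, hb⟩, hc⟩; exact ⟨ha, hc⟩
          · rintro ⟨ha, hb⟩; exact ⟨⟨ha, by linarith⟩, hb⟩
        rw [hR1, hR2, Real.volume_Ioo, Real.volume_Ioc,
          ← ENNReal.ofReal_mul (by norm_num), ← ENNReal.ofReal_mul (by norm_num),
          ← ENNReal.ofReal_mul (by norm_num), ← ENNReal.ofReal_mul (by norm_num),
          ← ENNReal.ofReal_add (by linarith) (by linarith),
          ← ENNReal.ofReal_add (by norm_num) (by linarith)]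
        congr 1; ring
    · have hS1 : Ioo (-2:ℝ) 0 ∩ T ⁻¹' Iic t = Ioo (-2) 0 := by
        apply inter_eq_left.2
        rintro x ⟨ha, hb⟩
        simp only [hT, mem_preimage, mem_Iic]
        rw [if_pos hb.le]; linarith
      have hS2 : Ioo (0:ℝ) 2 ∩ T ⁻¹' Iic t = Ioo 0 2 := by
        apply inter_eq_left.2
        rintro x ⟨ha, hb⟩
        simp only [hT, mem_preimage, mem_Iic]
        rw [if_neg (not_le.2 ha)]; linarith
      have hR1 : Ioo (-2:ℝ) 0 ∩ Iic t = Ioo (-2) 0 := by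
        apply inter_eq_left.2
        intro x hx; exact hx.2.le.trans (by linarith)
      have hR2 : Ioo (0:ℝ) 2 ∩ Iic t = Ioo 0 2 := by
        apply inter_eq_left.2
        intro x hx; exact hx.2.le.trans h2
      rw [hS1, hS2, hR1, hR2]
  · rw [key _ measurableSet_Ioo, inter_self]
    have h1 : Ioo (-2:ℝ) 0 ∩ Ioo 0 2 = ∅ := by
      ext x
      simp only [mem_inter_iff, mem_Ioo, mem_empty_iff_false, iff_false]
      rintro ⟨⟨ha, hb⟩, hc, hd⟩; linarith
    rw [h1, measure_empty, mul_zero, zero_add, Real.volume_Ioo,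
      ← ENNReal.ofReal_mul (by norm_num)]
    norm_num
end

section
/- Let T : ℝ → ℝ be defined by T(x) = x + 2 if x ≤ 0 and T(x) = 4 − 2x if x > 0 (the case s = 2, β = 4). Let μ be the measure on ℝ with density ρ with respect to Lebesgue measure, where ρ(x) = 1/18 for x ∈ (−4, −2), ρ(x) = 1/9 for x ∈ (−2, 0), ρ(x) = 2/9 for x ∈ (0, 2), ρ(x) = 1/9 for x ∈ (2, 4), and ρ(x) = 0 otherwise. Then μ is a probability measure, μ is T-invariant, and μ((0, 4)) = 2/3. -/
open MeasureTheory Set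

private lemma restrict_split_aux {a b c : ℝ} (hab : a < b) (hbc : b < c) :
    (volume : Measure ℝ).restrict (Ioo a c) =
      volume.restrict (Ioo a b) + volume.restrict (Ioo b c) := by
  have hdisj : Disjoint (Ioo a b) (Ioo b c) := by
    rw [Set.disjoint_left]
    intro x hx hx'
    exact absurd hx.2 (not_lt.2 hx'.1.le)
  have hae : Ioo a c =ᵐ[volume] (Ioo a b ∪ Ioo b c : Set ℝ) := by
    rw [MeasureTheory.ae_eq_set]
    constructor
    · refine measure_mono_null (fun x hx => ?_) (Real.volume_singleton (a := b))
      simp only [mem_diff, mem_Ioo, mem_union, not_or, mem_singleton_iff] at hx ⊢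
      rcases lt_trichotomy x b with h | h | h
      · exact absurd ⟨hx.1.1, h⟩ hx.2.1
      · exact h
      · exact absurd ⟨h, hx.1.2⟩ hx.2.2
    · refine measure_mono_null (fun x hx => ?_) (measure_empty (μ := volume))
      simp only [mem_diff, mem_union, mem_Ioo] at hx
      rcases hx.1 with h | h
      · exact absurd ⟨h.1, h.2.trans hbc⟩ hx.2
      · exact absurd ⟨hab.trans h.1, h.2⟩ hx.2
  rw [Measure.restrict_congr_set hae, Measure.restrict_union hdisj measurableSet_Ioo]

theorem invariant_density_s_two_beta_four
    (T : ℝ → ℝ) (hT : T = fun x => if x ≤ 0 then x + 2 else 4 - 2 * x)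
    (ρ : ℝ → ENNReal)
    (hρ : ρ = fun x =>
      if x ∈ Ioo (-4 : ℝ) (-2) then ENNReal.ofReal (1 / 18)
      else if x ∈ Ioo (-2 : ℝ) 0 then ENNReal.ofReal (1 / 9)
      else if x ∈ Ioo (0 : ℝ) 2 then ENNReal.ofReal (2 / 9)
      else if x ∈ Ioo (2 : ℝ) 4 then ENNReal.ofReal (1 / 9)
      else 0)
    (μ : Measure ℝ) (hμ : μ = volume.withDensity ρ) :
    IsProbabilityMeasure μ ∧ μ.map T = μ ∧ μ (Ioo (0 : ℝ) 4) = ENNReal.ofReal (2 / 3) := by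
  set c1 : ENNReal := ENNReal.ofReal (1 / 18) with hc1
  set c2 : ENNReal := ENNReal.ofReal (1 / 9) with hc2
  set c3 : ENNReal := ENNReal.ofReal (2 / 9) with hc3
  -- decompose ρ as a sum of indicators
  have hρ' : ρ = (Ioo (-4 : ℝ) (-2)).indicator (fun _ => c1) +
      ((Ioo (-2 : ℝ) 0).indicator (fun _ => c2) +
      ((Ioo (0 : ℝ) 2).indicator (fun _ => c3) +
      (Ioo (2 : ℝ) 4).indicator (fun _ => c2))) := by
    funext x
    simp only [hρ, Pi.add_apply]
    split_ifs with h1 h2 h3 h4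
    · have n2 : x ∉ Ioo (-2 : ℝ) 0 := by simp only [mem_Ioo] at h1 ⊢; intro h; linarith [h1.2, h.1]
      have n3 : x ∉ Ioo (0 : ℝ) 2 := by simp only [mem_Ioo] at h1 ⊢; intro h; linarith [h1.2, h.1]
      have n4 : x ∉ Ioo (2 : ℝ) 4 := by simp only [mem_Ioo] at h1 ⊢; intro h; linarith [h1.2, h.1]
      simp [indicator_of_mem h1, indicator_of_notMem n2, indicator_of_notMem n3,
        indicator_of_notMem n4]
    · have n3 : x ∉ Ioo (0 : ℝ) 2 := by simp only [mem_Ioo] at h2 ⊢; intro h; linarith [h2.2, h.1]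
      have n4 : x ∉ Ioo (2 : ℝ) 4 := by simp only [mem_Ioo] at h2 ⊢; intro h; linarith [h2.2, h.1]
      simp [indicator_of_mem h2, indicator_of_notMem h1, indicator_of_notMem n3,
        indicator_of_notMem n4]
    · have n4 : x ∉ Ioo (2 : ℝ) 4 := by simp only [mem_Ioo] at h3 ⊢; intro h; linarith [h3.2, h.1]
      simp [indicator_of_mem h3, indicator_of_notMem h1, indicator_of_notMem h2,
        indicator_of_notMem n4]
    · simp [indicator_of_mem h4, indicator_of_notMem h1, indicator_of_notMem h2,
        indicator_of_notMem h3]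
    · simp [indicator_of_notMem h1, indicator_of_notMem h2, indicator_of_notMem h3,
        indicator_of_notMem h4]
  have m1 : Measurable ((Ioo (-4 : ℝ) (-2)).indicator (fun _ => c1)) :=
    measurable_const.indicator measurableSet_Ioo
  have m2 : Measurable ((Ioo (-2 : ℝ) 0).indicator (fun _ => c2)) :=
    measurable_const.indicator measurableSet_Ioo
  have m3 : Measurable ((Ioo (0 : ℝ) 2).indicator (fun _ => c3)) :=
    measurable_const.indicator measurableSet_Ioo
  have m4 : Measurable ((Ioo (2 : ℝ) 4).indicator (fun _ => c2)) :=
    measurable_const.indicator measurableSet_Ioo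
  have m34 : Measurable ((Ioo (0 : ℝ) 2).indicator (fun _ => c3) +
      (Ioo (2 : ℝ) 4).indicator (fun _ => c2)) := m3.add m4
  have m234 : Measurable ((Ioo (-2 : ℝ) 0).indicator (fun _ => c2) +
      ((Ioo (0 : ℝ) 2).indicator (fun _ => c3) +
      (Ioo (2 : ℝ) 4).indicator (fun _ => c2))) := m2.add m34
  have hdecomp : μ = c1 • volume.restrict (Ioo (-4 : ℝ) (-2)) +
      (c2 • volume.restrict (Ioo (-2 : ℝ) 0) +
      (c3 • volume.restrict (Ioo (0 : ℝ) 2) +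
      c2 • volume.restrict (Ioo (2 : ℝ) 4))) := by
    rw [hμ, hρ', withDensity_add_right _ m234, withDensity_add_right _ m34,
      withDensity_add_right _ m4,
      withDensity_indicator measurableSet_Ioo, withDensity_indicator measurableSet_Ioo,
      withDensity_indicator measurableSet_Ioo, withDensity_indicator measurableSet_Ioo,
      withDensity_const, withDensity_const, withDensity_const, withDensity_const]
  have hTmeas : Measurable T := by
    rw [hT]
    exact Measurable.ite measurableSet_Iic (measurable_id.add_const 2)
      ((measurable_const.sub (measurable_id.const_mul 2)))
  refine ⟨?_, ?_, ?_⟩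
  · constructor
    rw [hdecomp]
    simp only [Measure.coe_add, Pi.add_apply, Measure.smul_apply, smul_eq_mul,
      Measure.restrict_apply_univ, Real.volume_Ioo]
    rw [hc1, hc2, hc3, show ((-2 : ℝ) - -4) = 2 from by norm_num,
      show ((0 : ℝ) - -2) = 2 from by norm_num, show ((2 : ℝ) - 0) = 2 from by norm_num,
      show ((4 : ℝ) - 2) = 2 from by norm_num,
      ← ENNReal.ofReal_mul (by norm_num : (0:ℝ) ≤ 1/18),
      ← ENNReal.ofReal_mul (by norm_num : (0:ℝ) ≤ 1/9),
      ← ENNReal.ofReal_mul (by norm_num : (0:ℝ) ≤ 2/9),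
      ← ENNReal.ofReal_add (by norm_num) (by norm_num),
      ← ENNReal.ofReal_add (by norm_num) (by norm_num),
      ← ENNReal.ofReal_add (by norm_num) (by norm_num)]
    norm_num
  · -- invariance
    have hmap1 : (volume.restrict (Ioo (-4 : ℝ) (-2))).map T = volume.restrict (Ioo (-2 : ℝ) 0) := by
      have hcong : T =ᵐ[volume.restrict (Ioo (-4 : ℝ) (-2))] (fun x => x + 2) := by
        filter_upwards [ae_restrict_mem measurableSet_Ioo] with x hx
        simp only [hT]
        simp only [mem_Ioo] at hx
        rw [if_pos (by linarith [hx.2])]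
      have hpre : Ioo (-4 : ℝ) (-2) = (fun x : ℝ => x + 2) ⁻¹' Ioo (-2) 0 := by
        ext x; simp only [mem_preimage, mem_Ioo]; constructor <;> rintro ⟨h, h'⟩ <;>
          constructor <;> linarith
      rw [Measure.map_congr hcong, hpre,
        ← Measure.restrict_map (f := fun x : ℝ => x + 2) (measurable_id.add_const 2) measurableSet_Ioo,
        map_add_right_eq_self volume 2]
    have hmap2 : (volume.restrict (Ioo (-2 : ℝ) 0)).map T = volume.restrict (Ioo (0 : ℝ) 2) := by
      have hcong : T =ᵐ[volume.restrict (Ioo (-2 : ℝ) 0)] (fun x => x + 2) := by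
        filter_upwards [ae_restrict_mem measurableSet_Ioo] with x hx
        simp only [hT]
        simp only [mem_Ioo] at hx
        rw [if_pos (by linarith [hx.2])]
      have hpre : Ioo (-2 : ℝ) 0 = (fun x : ℝ => x + 2) ⁻¹' Ioo 0 2 := by
        ext x; simp only [mem_preimage, mem_Ioo]; constructor <;> rintro ⟨h, h'⟩ <;>
          constructor <;> linarith
      rw [Measure.map_congr hcong, hpre,
        ← Measure.restrict_map (f := fun x : ℝ => x + 2) (measurable_id.add_const 2) measurableSet_Ioo,
        map_add_right_eq_self volume 2]
    -- affine map
    have hF : Measure.map (fun x : ℝ => 4 - 2 * x) volume = ENNReal.ofReal (1 / 2) • volume := by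
      have hcomp : (fun x : ℝ => 4 - 2 * x) = (fun y : ℝ => 4 + y) ∘ (fun x : ℝ => (-2) * x) := by
        funext x; simp [Function.comp]; ring
      rw [hcomp, ← Measure.map_map (measurable_const_add 4) (measurable_const_mul (-2)),
        Real.map_volume_mul_left (by norm_num : (-2 : ℝ) ≠ 0), Measure.map_smul,
        map_add_left_eq_self volume 4]
      norm_num [abs_of_nonneg]
    have hFmeas : Measurable (fun x : ℝ => 4 - 2 * x) :=
      measurable_const.sub (measurable_id.const_mul 2)
    have hmap3 : (volume.restrict (Ioo (0 : ℝ) 2)).map T =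
        ENNReal.ofReal (1 / 2) • volume.restrict (Ioo (0 : ℝ) 4) := by
      have hcong : T =ᵐ[volume.restrict (Ioo (0 : ℝ) 2)] (fun x => 4 - 2 * x) := by
        filter_upwards [ae_restrict_mem measurableSet_Ioo] with x hx
        simp only [hT]
        simp only [mem_Ioo] at hx
        rw [if_neg (by linarith [hx.1])]
      have hpre : Ioo (0 : ℝ) 2 = (fun x : ℝ => 4 - 2 * x) ⁻¹' Ioo 0 4 := by
        ext x; simp only [mem_preimage, mem_Ioo]; constructor <;> rintro ⟨h, h'⟩ <;>
          constructor <;> linarith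
      rw [Measure.map_congr hcong, hpre,
        ← Measure.restrict_map hFmeas measurableSet_Ioo, hF, Measure.restrict_smul]
    have hmap4 : (volume.restrict (Ioo (2 : ℝ) 4)).map T =
        ENNReal.ofReal (1 / 2) • volume.restrict (Ioo (-4 : ℝ) 0) := by
      have hcong : T =ᵐ[volume.restrict (Ioo (2 : ℝ) 4)] (fun x => 4 - 2 * x) := by
        filter_upwards [ae_restrict_mem measurableSet_Ioo] with x hx
        simp only [hT]
        simp only [mem_Ioo] at hx
        rw [if_neg (by linarith [hx.1])]
      have hpre : Ioo (2 : ℝ) 4 = (fun x : ℝ => 4 - 2 * x) ⁻¹' Ioo (-4) 0 := by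
        ext x; simp only [mem_preimage, mem_Ioo]; constructor <;> rintro ⟨h, h'⟩ <;>
          constructor <;> linarith
      rw [Measure.map_congr hcong, hpre,
        ← Measure.restrict_map hFmeas measurableSet_Ioo, hF, Measure.restrict_smul]
    have hsplit1 : volume.restrict (Ioo (0 : ℝ) 4) =
        volume.restrict (Ioo (0 : ℝ) 2) + volume.restrict (Ioo (2 : ℝ) 4) :=
      restrict_split_aux (by norm_num) (by norm_num)
    have hsplit2 : volume.restrict (Ioo (-4 : ℝ) 0) =
        volume.restrict (Ioo (-4 : ℝ) (-2)) + volume.restrict (Ioo (-2 : ℝ) 0) :=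
      restrict_split_aux (by norm_num) (by norm_num)
    have hhalf3 : c3 * ENNReal.ofReal (1 / 2) = c2 := by
      rw [hc2, hc3, ← ENNReal.ofReal_mul (by norm_num)]; norm_num
    have hhalf2 : c2 * ENNReal.ofReal (1 / 2) = c1 := by
      rw [hc1, hc2, ← ENNReal.ofReal_mul (by norm_num)]; norm_num
    have hcc1 : c1 + c1 = c2 := by
      rw [hc1, hc2, ← ENNReal.ofReal_add (by norm_num) (by norm_num)]; norm_num
    have hcc2 : c2 + c2 = c3 := by
      rw [hc2, hc3, ← ENNReal.ofReal_add (by norm_num) (by norm_num)]; norm_num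
    conv_lhs => rw [hdecomp]
    rw [Measure.map_add _ _ hTmeas, Measure.map_add _ _ hTmeas, Measure.map_add _ _ hTmeas,
      Measure.map_smul, Measure.map_smul, Measure.map_smul, Measure.map_smul,
      hmap1, hmap2, hmap3, hmap4, hsplit1, hsplit2,
      smul_smul, smul_smul, hhalf3, hhalf2]
    conv_rhs => rw [hdecomp]
    rw [← hcc2, ← hcc1]
    simp only [smul_add, add_smul]
    abel
  · rw [hdecomp]
    have e1 : Ioo (0 : ℝ) 4 ∩ Ioo (-4) (-2) = ∅ := by
      ext x; simp only [mem_inter_iff, mem_Ioo, mem_empty_iff_false, iff_false]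
      rintro ⟨⟨h1, h2⟩, h3, h4⟩; linarith
    have e2 : Ioo (0 : ℝ) 4 ∩ Ioo (-2) 0 = ∅ := by
      ext x; simp only [mem_inter_iff, mem_Ioo, mem_empty_iff_false, iff_false]
      rintro ⟨⟨h1, h2⟩, h3, h4⟩; linarith
    have e3 : Ioo (0 : ℝ) 4 ∩ Ioo 0 2 = Ioo (0 : ℝ) 2 := by
      ext x; simp only [mem_inter_iff, mem_Ioo]
      constructor
      · rintro ⟨_, h⟩; exact h
      · rintro ⟨h1, h2⟩; exact ⟨⟨h1, by linarith⟩, h1, h2⟩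
    have e4 : Ioo (0 : ℝ) 4 ∩ Ioo 2 4 = Ioo (2 : ℝ) 4 := by
      ext x; simp only [mem_inter_iff, mem_Ioo]
      constructor
      · rintro ⟨_, h⟩; exact h
      · rintro ⟨h1, h2⟩; exact ⟨⟨by linarith, h2⟩, h1, h2⟩
    simp only [Measure.coe_add, Pi.add_apply, Measure.smul_apply, smul_eq_mul,
      Measure.restrict_apply measurableSet_Ioo, e1, e2, e3, e4, measure_empty, mul_zero,
      Real.volume_Ioo, zero_add]
    rw [hc2, hc3, show ((2 : ℝ) - 0) = 2 from by norm_num,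
      show ((4 : ℝ) - 2) = 2 from by norm_num,
      ← ENNReal.ofReal_mul (by norm_num : (0:ℝ) ≤ 2/9),
      ← ENNReal.ofReal_mul (by norm_num : (0:ℝ) ≤ 1/9),
      ← ENNReal.ofReal_add (by norm_num) (by norm_num)]
    norm_num
end

section
/- Let 2 < β < 3 and let T : ℝ → ℝ be defined by T(x) = x + 2 if x ≤ 0 and T(x) = β − 2x if x > 0. Let μ be the measure on ℝ with density ρ with respect to Lebesgue measure, where ρ(x) = 1/18 for x ∈ (−β, β−4), ρ(x) = 1/6 for x ∈ (β−4, 2−β), ρ(x) = 2/9 for x ∈ (2−β, β−2), ρ(x) = 1/3 for x ∈ (β−2, 2), ρ(x) = 1/9 for x ∈ (2, β), and ρ(x) = 0 otherwise. Then μ is a probability measure and μ is T-invariant. -/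
open MeasureTheory Set

private lemma restrict_split (a b c : ℝ) (h1 : a ≤ b) (h2 : b < c) :
    (volume : Measure ℝ).restrict (Ioo a c)
      = volume.restrict (Ioo a b) + volume.restrict (Ioo b c) := by
  rw [← Ioc_union_Ioo_eq_Ioo h1 h2,
    Measure.restrict_union ?_ measurableSet_Ioo, ← restrict_Ioo_eq_restrict_Ioc]
  rw [Set.disjoint_left]
  rintro x ⟨hx1, hx2⟩ ⟨hx3, hx4⟩
  exact absurd hx2 (not_le.2 hx3)

private lemma map_g_restrict (s : Set ℝ) (hs : MeasurableSet s) :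
    ((volume : Measure ℝ).restrict ((fun x => 2 + x) ⁻¹' s)).map (fun x => 2 + x)
      = volume.restrict s := by
  rw [← Measure.restrict_map (measurable_const_add 2) hs,
    (measurePreserving_add_left volume 2).map_eq]

private lemma map_f_restrict (β : ℝ) (s : Set ℝ) (hs : MeasurableSet s) :
    ((volume : Measure ℝ).restrict ((fun x => β - 2 * x) ⁻¹' s)).map (fun x => β - 2 * x)
      = ENNReal.ofReal (1 / 2) • volume.restrict s := by
  have hmeas : Measurable (fun x : ℝ => β - 2 * x) := by fun_prop
  have hmap : Measure.map (fun x : ℝ => β - 2 * x) volume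
      = ENNReal.ofReal (1 / 2) • (volume : Measure ℝ) := by
    have hco : (fun x : ℝ => β - 2 * x) = (fun y => β + y) ∘ (fun x : ℝ => (-2) * x) := by
      funext x; simp; ring
    rw [hco, ← Measure.map_map (measurable_const_add β) (by fun_prop),
      Real.map_volume_mul_left (by norm_num : (-2 : ℝ) ≠ 0), Measure.map_smul,
      (measurePreserving_add_left volume β).map_eq]
    norm_num [abs_of_pos]
  rw [← Measure.restrict_map hmeas hs, hmap, Measure.restrict_smul]

theorem invariant_density_s_two_beta_two_three (β : ℝ) (hβ₁ : 2 < β) (hβ₂ : β < 3)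
    (T : ℝ → ℝ) (hT : T = fun x => if x ≤ 0 then x + 2 else β - 2 * x)
    (ρ : ℝ → ENNReal)
    (hρ : ρ = fun x =>
      if x ∈ Ioo (-β) (β - 4) then ENNReal.ofReal (1 / 18)
      else if x ∈ Ioo (β - 4) (2 - β) then ENNReal.ofReal (1 / 6)
      else if x ∈ Ioo (2 - β) (β - 2) then ENNReal.ofReal (2 / 9)
      else if x ∈ Ioo (β - 2) 2 then ENNReal.ofReal (1 / 3)
      else if x ∈ Ioo (2 : ℝ) β then ENNReal.ofReal (1 / 9)
      else 0)
    (μ : Measure ℝ) (hμ : μ = volume.withDensity ρ) :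
    IsProbabilityMeasure μ ∧ μ.map T = μ := by
  -- abbreviations
  set c18 := ENNReal.ofReal (1 / 18) with hc18
  set c6 := ENNReal.ofReal (1 / 6) with hc6
  set c29 := ENNReal.ofReal (2 / 9) with hc29
  set c13 := ENNReal.ofReal (1 / 3) with hc13
  set c19 := ENNReal.ofReal (1 / 9) with hc19
  -- ρ as a sum of indicators
  have hρ' : ρ = (Ioo (-β) (β - 4)).indicator (fun _ => c18)
      + (Ioo (β - 4) (2 - β)).indicator (fun _ => c6)
      + (Ioo (2 - β) (β - 2)).indicator (fun _ => c29)
      + (Ioo (β - 2) 2).indicator (fun _ => c13)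
      + (Ioo (2 : ℝ) β).indicator (fun _ => c19) := by
    funext x
    simp only [hρ, Pi.add_apply, Set.indicator_apply, Set.mem_Ioo]
    split_ifs <;> first
      | (exfalso; casesm* _ ∧ _; linarith)
      | simp
  -- decomposition of μ
  have hdec : μ = c18 • volume.restrict (Ioo (-β) (β - 4))
      + c6 • volume.restrict (Ioo (β - 4) (2 - β))
      + c29 • volume.restrict (Ioo (2 - β) (β - 2))
      + c13 • volume.restrict (Ioo (β - 2) 2)
      + c19 • volume.restrict (Ioo (2 : ℝ) β) := by
    have hm : ∀ (a b : ℝ) (c : ENNReal), Measurable ((Ioo a b).indicator (fun _ => c)) :=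
      fun a b c => measurable_const.indicator measurableSet_Ioo
    have hm2 : Measurable ((Ioo (-β) (β - 4)).indicator (fun _ => c18)
        + (Ioo (β - 4) (2 - β)).indicator (fun _ => c6)) := (hm _ _ _).add (hm _ _ _)
    have hm3 : Measurable ((Ioo (-β) (β - 4)).indicator (fun _ => c18)
        + (Ioo (β - 4) (2 - β)).indicator (fun _ => c6)
        + (Ioo (2 - β) (β - 2)).indicator (fun _ => c29)) := hm2.add (hm _ _ _)
    have hm4 : Measurable ((Ioo (-β) (β - 4)).indicator (fun _ => c18)
        + (Ioo (β - 4) (2 - β)).indicator (fun _ => c6)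
        + (Ioo (2 - β) (β - 2)).indicator (fun _ => c29)
        + (Ioo (β - 2) 2).indicator (fun _ => c13)) := hm3.add (hm _ _ _)
    rw [hμ, hρ']
    rw [withDensity_add_left hm4, withDensity_add_left hm3,
      withDensity_add_left hm2, withDensity_add_left (hm _ _ _)]
    rw [withDensity_indicator measurableSet_Ioo, withDensity_indicator measurableSet_Ioo,
      withDensity_indicator measurableSet_Ioo, withDensity_indicator measurableSet_Ioo,
      withDensity_indicator measurableSet_Ioo]
    simp [withDensity_const]
  constructor
  · -- probability measure
    constructor
    rw [hdec]
    simp only [Measure.add_apply, Measure.smul_apply, smul_eq_mul,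
      Measure.restrict_apply_univ, Real.volume_Ioo]
    rw [hc18, hc6, hc29, hc13, hc19,
      ← ENNReal.ofReal_mul (by norm_num), ← ENNReal.ofReal_mul (by norm_num),
      ← ENNReal.ofReal_mul (by norm_num), ← ENNReal.ofReal_mul (by norm_num),
      ← ENNReal.ofReal_mul (by norm_num),
      ← ENNReal.ofReal_add (by nlinarith) (by nlinarith),
      ← ENNReal.ofReal_add (by nlinarith) (by nlinarith),
      ← ENNReal.ofReal_add (by nlinarith) (by nlinarith),
      ← ENNReal.ofReal_add (by nlinarith) (by nlinarith)]
    rw [show 1 / 18 * (β - 4 - -β) + 1 / 6 * (2 - β - (β - 4)) + 2 / 9 * (β - 2 - (2 - β))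
        + 1 / 3 * (2 - (β - 2)) + 1 / 9 * (β - 2) = 1 by ring]
    exact ENNReal.ofReal_one
  · -- invariance
    have hTm : Measurable T := by
      rw [hT]
      exact Measurable.ite (measurableSet_le measurable_id measurable_const)
        (by fun_prop) (by fun_prop)
    -- congruence on pieces: T = (2 + ·) on sets of nonpositive reals
    have hcongr_g : ∀ s : Set ℝ, MeasurableSet s → (∀ x ∈ s, x ≤ 0) →
        (volume.restrict s).map T = (volume.restrict s).map (fun x => 2 + x) := by
      intro s hs h
      refine Measure.map_congr (ae_restrict_of_forall_mem hs fun x hx => ?_)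
      rw [hT]; simp only []; rw [if_pos (h x hx)]; ring
    have hcongr_f : ∀ s : Set ℝ, MeasurableSet s → (∀ x ∈ s, 0 < x) →
        (volume.restrict s).map T = (volume.restrict s).map (fun x => β - 2 * x) := by
      intro s hs h
      refine Measure.map_congr (ae_restrict_of_forall_mem hs fun x hx => ?_)
      rw [hT]; simp only []; rw [if_neg (not_le.2 (h x hx))]
    -- piece A
    have hA : (volume.restrict (Ioo (-β) (β - 4))).map T
        = volume.restrict (Ioo (2 - β) (β - 2)) := by
      rw [hcongr_g _ measurableSet_Ioo (fun x hx => by rcases hx with ⟨_, h⟩; linarith),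
        show Ioo (-β) (β - 4) = (fun x : ℝ => 2 + x) ⁻¹' Ioo (2 - β) (β - 2) by
          ext x; simp only [mem_Ioo, mem_preimage]; constructor <;> rintro ⟨h1, h2⟩ <;>
            constructor <;> linarith]
      exact map_g_restrict _ measurableSet_Ioo
    -- piece B
    have hB : (volume.restrict (Ioo (β - 4) (2 - β))).map T
        = volume.restrict (Ioo (β - 2) (4 - β)) := by
      rw [hcongr_g _ measurableSet_Ioo (fun x hx => by rcases hx with ⟨_, h⟩; linarith),
        show Ioo (β - 4) (2 - β) = (fun x : ℝ => 2 + x) ⁻¹' Ioo (β - 2) (4 - β) by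
          ext x; simp only [mem_Ioo, mem_preimage]; constructor <;> rintro ⟨h1, h2⟩ <;>
            constructor <;> linarith]
      exact map_g_restrict _ measurableSet_Ioo
    -- piece C, split at 0
    have hCsplit : volume.restrict (Ioo (2 - β) (β - 2))
        = volume.restrict (Ioc (2 - β) 0) + volume.restrict (Ioo 0 (β - 2)) := by
      rw [← Ioc_union_Ioo_eq_Ioo (by linarith : 2 - β ≤ 0) (by linarith : (0:ℝ) < β - 2),
        Measure.restrict_union ?_ measurableSet_Ioo]
      rw [Set.disjoint_left]
      rintro x ⟨hx1, hx2⟩ ⟨hx3, hx4⟩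
      exact absurd hx2 (not_le.2 hx3)
    have hC1 : (volume.restrict (Ioc (2 - β) 0)).map T
        = volume.restrict (Ioo (4 - β) 2) := by
      rw [hcongr_g _ measurableSet_Ioc (fun x hx => hx.2),
        show Ioc (2 - β) 0 = (fun x : ℝ => 2 + x) ⁻¹' Ioc (4 - β) 2 by
          ext x; simp only [mem_Ioc, mem_preimage]; constructor <;> rintro ⟨h1, h2⟩ <;>
            constructor <;> linarith]
      rw [map_g_restrict _ measurableSet_Ioc, restrict_Ioo_eq_restrict_Ioc]
    have hC2 : (volume.restrict (Ioo 0 (β - 2))).map T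
        = ENNReal.ofReal (1 / 2) • volume.restrict (Ioo (4 - β) β) := by
      rw [hcongr_f _ measurableSet_Ioo (fun x hx => hx.1),
        show Ioo (0:ℝ) (β - 2) = (fun x : ℝ => β - 2 * x) ⁻¹' Ioo (4 - β) β by
          ext x; simp only [mem_Ioo, mem_preimage]; constructor <;> rintro ⟨h1, h2⟩ <;>
            constructor <;> linarith]
      exact map_f_restrict β _ measurableSet_Ioo
    -- piece D
    have hD : (volume.restrict (Ioo (β - 2) 2)).map T
        = ENNReal.ofReal (1 / 2) • volume.restrict (Ioo (β - 4) (4 - β)) := by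
      rw [hcongr_f _ measurableSet_Ioo (fun x hx => by rcases hx with ⟨h, _⟩; linarith),
        show Ioo (β - 2) 2 = (fun x : ℝ => β - 2 * x) ⁻¹' Ioo (β - 4) (4 - β) by
          ext x; simp only [mem_Ioo, mem_preimage]; constructor <;> rintro ⟨h1, h2⟩ <;>
            constructor <;> linarith]
      exact map_f_restrict β _ measurableSet_Ioo
    -- piece E
    have hE : (volume.restrict (Ioo (2:ℝ) β)).map T
        = ENNReal.ofReal (1 / 2) • volume.restrict (Ioo (-β) (β - 4)) := by
      rw [hcongr_f _ measurableSet_Ioo (fun x hx => by rcases hx with ⟨h, _⟩; linarith),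
        show Ioo (2:ℝ) β = (fun x : ℝ => β - 2 * x) ⁻¹' Ioo (-β) (β - 4) by
          ext x; simp only [mem_Ioo, mem_preimage]; constructor <;> rintro ⟨h1, h2⟩ <;>
            constructor <;> linarith]
      exact map_f_restrict β _ measurableSet_Ioo
    -- splits of targets
    have hs14 : volume.restrict (Ioo (β - 4) (4 - β))
        = volume.restrict (Ioo (β - 4) (2 - β)) + volume.restrict (Ioo (2 - β) (β - 2))
          + volume.restrict (Ioo (β - 2) (4 - β)) := by
      rw [restrict_split (β - 4) (2 - β) (4 - β) (by linarith) (by linarith),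
        restrict_split (2 - β) (β - 2) (4 - β) (by linarith) (by linarith), add_assoc]
    have hs46 : volume.restrict (Ioo (4 - β) β)
        = volume.restrict (Ioo (4 - β) 2) + volume.restrict (Ioo (2:ℝ) β) :=
      restrict_split (4 - β) 2 β (by linarith) (by linarith)
    have hs35 : volume.restrict (Ioo (β - 2) 2)
        = volume.restrict (Ioo (β - 2) (4 - β)) + volume.restrict (Ioo (4 - β) 2) :=
      restrict_split (β - 2) (4 - β) 2 (by linarith) (by linarith)
    -- coefficient identities
    have hco1 : c18 + c6 = c29 := by
      rw [hc18, hc6, hc29, ← ENNReal.ofReal_add (by norm_num) (by norm_num)]; norm_num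
    have hco2 : c6 + c6 = c13 := by
      rw [hc6, hc13, ← ENNReal.ofReal_add (by norm_num) (by norm_num)]; norm_num
    have hco3 : c29 + c19 = c13 := by
      rw [hc29, hc19, hc13, ← ENNReal.ofReal_add (by norm_num) (by norm_num)]; norm_num
    have hhalf1 : c29 * ENNReal.ofReal (1 / 2) = c19 := by
      rw [hc29, hc19, ← ENNReal.ofReal_mul (by norm_num)]; norm_num
    have hhalf2 : c13 * ENNReal.ofReal (1 / 2) = c6 := by
      rw [hc13, hc6, ← ENNReal.ofReal_mul (by norm_num)]; norm_num
    have hhalf3 : c19 * ENNReal.ofReal (1 / 2) = c18 := by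
      rw [hc19, hc18, ← ENNReal.ofReal_mul (by norm_num)]; norm_num
    -- assemble
    calc μ.map T
        = c18 • (volume.restrict (Ioo (-β) (β - 4))).map T
          + c6 • (volume.restrict (Ioo (β - 4) (2 - β))).map T
          + c29 • ((volume.restrict (Ioc (2 - β) 0)).map T
              + (volume.restrict (Ioo 0 (β - 2))).map T)
          + c13 • (volume.restrict (Ioo (β - 2) 2)).map T
          + c19 • (volume.restrict (Ioo (2:ℝ) β)).map T := by
          rw [hdec, hCsplit]
          simp only [Measure.map_add _ _ hTm, Measure.map_smul, smul_add]
      _ = c18 • volume.restrict (Ioo (2 - β) (β - 2))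
          + c6 • volume.restrict (Ioo (β - 2) (4 - β))
          + (c29 • volume.restrict (Ioo (4 - β) 2)
            + c19 • (volume.restrict (Ioo (4 - β) 2) + volume.restrict (Ioo (2:ℝ) β)))
          + c6 • (volume.restrict (Ioo (β - 4) (2 - β)) + volume.restrict (Ioo (2 - β) (β - 2))
              + volume.restrict (Ioo (β - 2) (4 - β)))
          + c18 • volume.restrict (Ioo (-β) (β - 4)) := by
          rw [hA, hB, hC1, hC2, hD, hE, hs14, hs46, smul_add, smul_smul, smul_smul, smul_smul,
            hhalf1, hhalf2, hhalf3]
      _ = c18 • volume.restrict (Ioo (-β) (β - 4))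
          + c6 • volume.restrict (Ioo (β - 4) (2 - β))
          + (c18 + c6) • volume.restrict (Ioo (2 - β) (β - 2))
          + ((c6 + c6) • volume.restrict (Ioo (β - 2) (4 - β))
            + (c29 + c19) • volume.restrict (Ioo (4 - β) 2))
          + c19 • volume.restrict (Ioo (2:ℝ) β) := by
          simp only [smul_add, add_smul]; abel
      _ = μ := by
          rw [hco1, hco2, hco3, hdec, hs35, smul_add]
          try abel
end

section
/- Let 3 < β < 4 and let T : ℝ → ℝ be defined by T(x) = x + 2 if x ≤ 0 and T(x) = β − 2x if x > 0. Let μ be the measure on ℝ with density ρ with respect to Lebesgue measure, where ρ(x) = 1/18 for x ∈ (−β, 2−β), ρ(x) = 1/9 for x ∈ (2−β, β−4), ρ(x) = 2/9 for x ∈ (β−4, β−2), ρ(x) = 1/3 for x ∈ (β−2, 2), ρ(x) = 1/9 for x ∈ (2, β), and ρ(x) = 0 otherwise. Then μ is a probability measure, μ is T-invariant, and μ([0, β]) = 2/3. -/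
/-!
The density `ρ` is a fixed point of the transfer operator of `T`. A point `y` has the preimage
`y - 2` on the branch `x ≤ 0` (slope `1`) and `(β - y) / 2` on the branch `x > 0` (slope `-2`),
so the image of `ρ · dx` under `T` has density
`y ↦ 1[y - 2 ≤ 0] ρ (y - 2) + 1[(β - y) / 2 > 0] ρ ((β - y) / 2) / 2`,
and comparing the values on each interval between consecutive breakpoints shows that this is
`ρ y` away from finitely many points. Both masses are sums of heights times lengths of the
steps of `ρ`.
-/

open MeasureTheory Set

namespace MeasureTheory.Measure

variable {α β : Type*} [MeasurableSpace α] [MeasurableSpace β]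

theorem map_piecewise (μ : Measure α) {s : Set α} (hs : MeasurableSet s) [DecidablePred (· ∈ s)]
    {f g : α → β} (hf : Measurable f) (hg : Measurable g) :
    μ.map (s.piecewise f g) = (μ.restrict s).map f + (μ.restrict sᶜ).map g := by
  conv_lhs => rw [← μ.restrict_add_restrict_compl hs]
  rw [Measure.map_add _ _ (hf.piecewise hs hg), map_congr (piecewise_ae_eq_restrict hs),
    map_congr (piecewise_ae_eq_restrict_compl hs)]

end MeasureTheory.Measure

theorem map_withDensity_affine {f : ℝ → ENNReal} (hf : Measurable f) {a : ℝ} (ha : a ≠ 0) (b : ℝ) :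
    (volume.withDensity f).map (fun x => a * x + b) =
      volume.withDensity fun y => ENNReal.ofReal |a⁻¹| * f ((y - b) / a) := by
  have hφ : Measurable fun x : ℝ => a * x + b := by fun_prop
  have hψ : Measurable fun y : ℝ => f ((y - b) / a) := hf.comp (by fun_prop)
  have hvol : volume.map (fun x : ℝ => a * x + b) = ENNReal.ofReal |a⁻¹| • volume := by
    rw [show (fun x : ℝ => a * x + b) = (· + b) ∘ (a * ·) from rfl,
      ← Measure.map_map (by fun_prop) (by fun_prop), Real.map_volume_mul_left ha,
      Measure.map_smul, map_add_right_eq_self]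
  ext s hs
  rw [Measure.map_apply hφ hs, withDensity_apply _ (hφ hs), withDensity_apply _ hs,
    lintegral_const_mul _ hψ]
  calc ∫⁻ x in (fun x => a * x + b) ⁻¹' s, f x
      = ∫⁻ x in (fun x => a * x + b) ⁻¹' s, f ((a * x + b - b) / a) := by
        simp only [add_sub_cancel_right, mul_div_cancel_left₀ _ ha]
    _ = ∫⁻ y in s, f ((y - b) / a) ∂(volume.map fun x => a * x + b) :=
        (setLIntegral_map hs hψ hφ).symm
    _ = _ := by rw [hvol, Measure.restrict_smul, lintegral_smul_measure, smul_eq_mul]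

theorem indicator_ofReal {α : Type*} (s : Set α) (f : α → ℝ) :
    s.indicator (fun x => ENNReal.ofReal (f x)) = fun x => ENNReal.ofReal (s.indicator f x) :=
  indicator_comp_of_zero ENNReal.ofReal_zero

theorem map_withDensity_ofReal_piecewise_affine {f : ℝ → ℝ} (hf : Measurable f) (hf₀ : 0 ≤ f)
    {s : Set ℝ} (hs : MeasurableSet s) [DecidablePred (· ∈ s)] {a₁ a₂ : ℝ} (ha₁ : a₁ ≠ 0)
    (ha₂ : a₂ ≠ 0) (b₁ b₂ : ℝ) :
    (volume.withDensity fun x => ENNReal.ofReal (f x)).map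
        (s.piecewise (fun x => a₁ * x + b₁) (fun x => a₂ * x + b₂)) =
      volume.withDensity fun y => ENNReal.ofReal
        (|a₁⁻¹| * s.indicator f ((y - b₁) / a₁) + |a₂⁻¹| * sᶜ.indicator f ((y - b₂) / a₂)) := by
  have hind₀ (t : Set ℝ) (z : ℝ) : 0 ≤ t.indicator f z := indicator_nonneg (fun x _ => hf₀ x) z
  rw [Measure.map_piecewise _ hs (by fun_prop) (by fun_prop), restrict_withDensity hs,
    restrict_withDensity hs.compl, ← withDensity_indicator hs, ← withDensity_indicator hs.compl,
    indicator_ofReal, indicator_ofReal, map_withDensity_affine (hf.indicator hs).ennreal_ofReal ha₁,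
    map_withDensity_affine (hf.indicator hs.compl).ennreal_ofReal ha₂, ← withDensity_add_left]
  · congr 1
    ext y
    rw [Pi.add_apply, ENNReal.ofReal_add (mul_nonneg (abs_nonneg _) (hind₀ _ _))
      (mul_nonneg (abs_nonneg _) (hind₀ _ _)), ENNReal.ofReal_mul (abs_nonneg _),
      ENNReal.ofReal_mul (abs_nonneg _)]
  · exact ((hf.indicator hs).ennreal_ofReal.comp (by fun_prop)).const_mul _

noncomputable def stepFunction {n : ℕ} (p : Fin (n + 1) → ℝ) (c : Fin n → ℝ) (x : ℝ) : ℝ :=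
  ∑ i : Fin n, (Ioo (p i.castSucc) (p i.succ)).indicator (fun _ => c i) x

theorem lintegral_ofReal_stepFunction {n : ℕ} {p : Fin (n + 1) → ℝ} {c : Fin n → ℝ}
    (hp : ∀ i : Fin n, p i.castSucc ≤ p i.succ) (hc : 0 ≤ c) :
    ∫⁻ x, ENNReal.ofReal (stepFunction p c x) =
      ENNReal.ofReal (∑ i, c i * (p i.succ - p i.castSucc)) := by
  have hterm (i : Fin n) : 0 ≤ c i * (p i.succ - p i.castSucc) :=
    mul_nonneg (hc i) (sub_nonneg.2 (hp i))
  simp_rw [stepFunction, ENNReal.ofReal_sum_of_nonneg (fun i _ => hterm i),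
    ENNReal.ofReal_sum_of_nonneg (fun i _ => indicator_nonneg (fun _ _ => hc i) _)]
  rw [lintegral_finsetSum _ fun i _ => (measurable_const.indicator measurableSet_Ioo).ennreal_ofReal]
  refine Finset.sum_congr rfl fun i _ => ?_
  rw [comp_indicator_const _ _ ENNReal.ofReal_zero, lintegral_indicator_const measurableSet_Ioo,
    Real.volume_Ioo, ENNReal.ofReal_mul (hc i)]

theorem ae_lt_or_mem_Ioo_or_gt (p₁ p₂ p₃ p₄ p₅ p₆ p₇ p₈ : ℝ) :
    ∀ᵐ y : ℝ, y < p₁ ∨ y ∈ Ioo p₁ p₂ ∨ y ∈ Ioo p₂ p₃ ∨ y ∈ Ioo p₃ p₄ ∨ y ∈ Ioo p₄ p₅ ∨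
      y ∈ Ioo p₅ p₆ ∨ y ∈ Ioo p₆ p₇ ∨ y ∈ Ioo p₇ p₈ ∨ p₈ < y := by
  filter_upwards [(toFinite {p₁, p₂, p₃, p₄, p₅, p₆, p₇, p₈}).countable.ae_notMem volume] with y hy
  simp only [mem_insert_iff, mem_singleton_iff, not_or] at hy
  obtain ⟨h₁, h₂, h₃, h₄, h₅, h₆, h₇, h₈⟩ := hy
  rcases lt_or_gt_of_ne h₁ with h | h₁
  · exact .inl h
  refine .inr ?_
  rcases lt_or_gt_of_ne h₂ with h | h₂
  · exact .inl ⟨h₁, h⟩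
  refine .inr ?_
  rcases lt_or_gt_of_ne h₃ with h | h₃
  · exact .inl ⟨h₂, h⟩
  refine .inr ?_
  rcases lt_or_gt_of_ne h₄ with h | h₄
  · exact .inl ⟨h₃, h⟩
  refine .inr ?_
  rcases lt_or_gt_of_ne h₅ with h | h₅
  · exact .inl ⟨h₄, h⟩
  refine .inr ?_
  rcases lt_or_gt_of_ne h₆ with h | h₆
  · exact .inl ⟨h₅, h⟩
  refine .inr ?_
  rcases lt_or_gt_of_ne h₇ with h | h₇
  · exact .inl ⟨h₆, h⟩
  refine .inr ?_
  rcases lt_or_gt_of_ne h₈ with h | h₈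
  · exact .inl ⟨h₇, h⟩
  · exact .inr h₈

noncomputable def invariantDensity (β x : ℝ) : ℝ :=
  if x ∈ Ioo (-β) (2 - β) then 1 / 18
  else if x ∈ Ioo (2 - β) (β - 4) then 1 / 9
  else if x ∈ Ioo (β - 4) (β - 2) then 2 / 9
  else if x ∈ Ioo (β - 2) 2 then 1 / 3
  else if x ∈ Ioo (2 : ℝ) β then 1 / 9
  else 0

theorem measurable_invariantDensity (β : ℝ) : Measurable (invariantDensity β) :=
  .ite measurableSet_Ioo measurable_const <| .ite measurableSet_Ioo measurable_const <|
    .ite measurableSet_Ioo measurable_const <| .ite measurableSet_Ioo measurable_const <|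
      .ite measurableSet_Ioo measurable_const measurable_const

theorem invariantDensity_nonneg (β : ℝ) : 0 ≤ invariantDensity β := by
  intro x
  unfold invariantDensity
  split_ifs <;> norm_num

section

variable {β : ℝ}

theorem invariantDensity_transfer (hβ₁ : 3 < β) (hβ₂ : β < 4) :
    ∀ᵐ y, (Iic 0).indicator (invariantDensity β) (y - 2) +
      (Ioi 0).indicator (invariantDensity β) ((β - y) / 2) / 2 = invariantDensity β y := by
  -- Besides the jumps of `invariantDensity β`, the cut points are `4 - β`, where `y - 2` crosses
  -- `2 - β`, and `0`, which only matters for `Icc 0 β` below.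
  filter_upwards [ae_lt_or_mem_Ioo_or_gt (-β) (2 - β) (β - 4) 0 (4 - β) (β - 2) 2 β] with y hy
  simp only [invariantDensity, indicator_apply, mem_Ioo, mem_Iic, mem_Ioi] at hy ⊢
  rcases hy with h | ⟨h₁, h₂⟩ | ⟨h₁, h₂⟩ | ⟨h₁, h₂⟩ | ⟨h₁, h₂⟩ | ⟨h₁, h₂⟩ | ⟨h₁, h₂⟩ | ⟨h₁, h₂⟩ | h <;>
    grind

theorem invariantDensity_ae_eq_stepFunction (hβ₁ : 3 < β) (hβ₂ : β < 4) :
    invariantDensity β =ᵐ[volume]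
      stepFunction ![-β, 2 - β, β - 4, β - 2, 2, β] ![1 / 18, 1 / 9, 2 / 9, 1 / 3, 1 / 9] := by
  filter_upwards [ae_lt_or_mem_Ioo_or_gt (-β) (2 - β) (β - 4) 0 (4 - β) (β - 2) 2 β] with y hy
  simp only [mem_Ioo, invariantDensity, stepFunction, Matrix.cons_val_succ, indicator_apply,
    Fin.sum_univ_succ, Fin.castSucc_zero, Matrix.cons_val_zero, Fin.castSucc_succ,
    Finset.univ_unique, Fin.default_eq_zero, Matrix.cons_val_fin_one, Finset.sum_singleton] at hy ⊢
  rcases hy with h | ⟨h₁, h₂⟩ | ⟨h₁, h₂⟩ | ⟨h₁, h₂⟩ | ⟨h₁, h₂⟩ | ⟨h₁, h₂⟩ | ⟨h₁, h₂⟩ | ⟨h₁, h₂⟩ | h <;>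
    grind

theorem indicator_Icc_invariantDensity_ae_eq_stepFunction (hβ₁ : 3 < β) (hβ₂ : β < 4) :
    (Icc 0 β).indicator (invariantDensity β) =ᵐ[volume]
      stepFunction ![0, β - 2, 2, β] ![2 / 9, 1 / 3, 1 / 9] := by
  filter_upwards [ae_lt_or_mem_Ioo_or_gt (-β) (2 - β) (β - 4) 0 (4 - β) (β - 2) 2 β] with y hy
  simp only [mem_Ioo, mem_Icc, invariantDensity, stepFunction, Matrix.cons_val_succ, indicator_apply,
    Fin.sum_univ_succ, Fin.castSucc_zero, Matrix.cons_val_zero, Fin.castSucc_succ,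
    Finset.univ_unique, Fin.default_eq_zero, Matrix.cons_val_fin_one, Finset.sum_singleton] at hy ⊢
  rcases hy with h | ⟨h₁, h₂⟩ | ⟨h₁, h₂⟩ | ⟨h₁, h₂⟩ | ⟨h₁, h₂⟩ | ⟨h₁, h₂⟩ | ⟨h₁, h₂⟩ | ⟨h₁, h₂⟩ | h <;>
    grind

theorem map_withDensity_invariantDensity (hβ₁ : 3 < β) (hβ₂ : β < 4) :
    (volume.withDensity fun x => ENNReal.ofReal (invariantDensity β x)).map
        (fun x => if x ≤ 0 then x + 2 else β - 2 * x) =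
      volume.withDensity fun x => ENNReal.ofReal (invariantDensity β x) := by
  have hT : (fun x : ℝ => if x ≤ 0 then x + 2 else β - 2 * x) =
      (Iic 0).piecewise (fun x => 1 * x + 2) (fun x => -2 * x + β) := by
    ext x
    simp only [piecewise, mem_Iic]
    split_ifs <;> ring
  rw [hT, map_withDensity_ofReal_piecewise_affine (measurable_invariantDensity β)
    (invariantDensity_nonneg β) measurableSet_Iic one_ne_zero (by norm_num)]
  refine withDensity_congr_ae ?_
  filter_upwards [invariantDensity_transfer hβ₁ hβ₂] with y hy
  rw [← hy, compl_Iic, show (y - β) / -2 = (β - y) / 2 by ring]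
  congr 1
  norm_num
  ring

theorem isProbabilityMeasure_withDensity_invariantDensity (hβ₁ : 3 < β) (hβ₂ : β < 4) :
    IsProbabilityMeasure (volume.withDensity fun x => ENNReal.ofReal (invariantDensity β x)) := by
  constructor
  rw [withDensity_apply _ MeasurableSet.univ, Measure.restrict_univ,
    lintegral_congr_ae ((invariantDensity_ae_eq_stepFunction hβ₁ hβ₂).mono fun x hx => by rw [hx]),
    lintegral_ofReal_stepFunction, ← ENNReal.ofReal_one]
  · congr 1
    simp only [Fin.sum_univ_succ, Matrix.cons_val_zero, Matrix.cons_val_succ, Fin.castSucc_zero,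
      Fin.castSucc_succ, Finset.univ_unique, Fin.default_eq_zero, Matrix.cons_val_fin_one,
      Finset.sum_singleton]
    ring
  · intro i
    fin_cases i <;>
      simp only [Fin.reduceFinMk, Fin.reduceCastSucc, Fin.reduceSucc, Matrix.cons_val] <;> linarith
  · intro i
    fin_cases i <;> norm_num

theorem withDensity_invariantDensity_Icc (hβ₁ : 3 < β) (hβ₂ : β < 4) :
    volume.withDensity (fun x => ENNReal.ofReal (invariantDensity β x)) (Icc 0 β) =
      ENNReal.ofReal (2 / 3) := by
  rw [withDensity_apply _ measurableSet_Icc, ← lintegral_indicator measurableSet_Icc,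
    indicator_ofReal, lintegral_congr_ae
      ((indicator_Icc_invariantDensity_ae_eq_stepFunction hβ₁ hβ₂).mono fun x hx => by rw [hx]),
    lintegral_ofReal_stepFunction]
  · congr 1
    simp only [Fin.sum_univ_succ, Matrix.cons_val_zero, Matrix.cons_val_succ, Fin.castSucc_zero,
      Fin.castSucc_succ, Finset.univ_unique, Fin.default_eq_zero, Matrix.cons_val_fin_one,
      Finset.sum_singleton]
    ring
  · intro i
    fin_cases i <;>
      simp only [Fin.reduceFinMk, Fin.reduceCastSucc, Fin.reduceSucc, Matrix.cons_val] <;> linarith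
  · intro i
    fin_cases i <;> norm_num

end

theorem invariant_density_s_two_beta_three_four (β : ℝ) (hβ₁ : 3 < β) (hβ₂ : β < 4)
    (T : ℝ → ℝ) (hT : T = fun x => if x ≤ 0 then x + 2 else β - 2 * x)
    (ρ : ℝ → ENNReal)
    (hρ : ρ = fun x =>
      if x ∈ Ioo (-β) (2 - β) then ENNReal.ofReal (1 / 18)
      else if x ∈ Ioo (2 - β) (β - 4) then ENNReal.ofReal (1 / 9)
      else if x ∈ Ioo (β - 4) (β - 2) then ENNReal.ofReal (2 / 9)
      else if x ∈ Ioo (β - 2) 2 then ENNReal.ofReal (1 / 3)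
      else if x ∈ Ioo (2 : ℝ) β then ENNReal.ofReal (1 / 9)
      else 0)
    (μ : Measure ℝ) (hμ : μ = volume.withDensity ρ) :
    IsProbabilityMeasure μ ∧ μ.map T = μ ∧ μ (Icc (0 : ℝ) β) = ENNReal.ofReal (2 / 3) := by
  have hρ' : ρ = fun x => ENNReal.ofReal (invariantDensity β x) := by
    simp only [hρ, invariantDensity, apply_ite ENNReal.ofReal, ENNReal.ofReal_zero]
  subst hT hμ hρ'
  exact ⟨isProbabilityMeasure_withDensity_invariantDensity hβ₁ hβ₂,
    map_withDensity_invariantDensity hβ₁ hβ₂, withDensity_invariantDensity_Icc hβ₁ hβ₂⟩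
end

section
/- Let 0 < β < 2 and let T : ℝ → ℝ be defined by T(x) = x + 2 if x ≤ 0 and T(x) = β − 2x if x > 0. Let μ be the measure on ℝ with density ρ with respect to Lebesgue measure, where ρ(x) = 1/(2(5−β)) for x ∈ (β−4, β−2), ρ(x) = 1/(5−β) for x ∈ (β−2, 2), and ρ(x) = 0 otherwise. Then μ is a probability measure, μ is T-invariant, and μ((0, 2)) = 2/(5−β). -/
open MeasureTheory Set

theorem invariant_density_s_two_beta_lt_two (β : ℝ) (hβ₁ : 0 < β) (hβ₂ : β < 2)
    (T : ℝ → ℝ) (hT : T = fun x => if x ≤ 0 then x + 2 else β - 2 * x)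
    (ρ : ℝ → ENNReal)
    (hρ : ρ = fun x =>
      if x ∈ Ioo (β - 4) (β - 2) then ENNReal.ofReal (1 / (2 * (5 - β)))
      else if x ∈ Ioo (β - 2) 2 then ENNReal.ofReal (1 / (5 - β))
      else 0)
    (μ : Measure ℝ) (hμ : μ = volume.withDensity ρ) :
    IsProbabilityMeasure μ ∧ μ.map T = μ ∧
      μ (Ioo (0 : ℝ) 2) = ENNReal.ofReal (2 / (5 - β)) := by
  have h5 : (0:ℝ) < 5 - β := by linarith
  set c₁ := ENNReal.ofReal (1/(2*(5-β))) with hc₁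
  set c₂ := ENNReal.ofReal (1/(5-β)) with hc₂
  have hcc : c₁ + c₁ = c₂ := by
    rw [hc₁, hc₂, ← ENNReal.ofReal_add (by positivity) (by positivity)]
    congr 1
    field_simp
    norm_num
  -- density as sum of indicators
  have hρ' : ρ = (Ioo (β-4) (β-2)).indicator (fun _ => c₁) +
      (Ioo (β-2) 2).indicator (fun _ => c₂) := by
    funext x
    simp only [hρ, Pi.add_apply, indicator]
    by_cases h1 : x ∈ Ioo (β-4) (β-2) <;> by_cases h2 : x ∈ Ioo (β-2) 2
    · exact absurd h2.1 (not_lt.mpr h1.2.le)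
    · simp [h1, h2]
    · simp [h1, h2]
    · simp [h1, h2]
  have hμ' : μ = c₁ • volume.restrict (Ioo (β-4) (β-2)) +
      c₂ • volume.restrict (Ioo (β-2) 2) := by
    rw [hμ, hρ', withDensity_add_left ((measurable_const).indicator measurableSet_Ioo),
      withDensity_indicator measurableSet_Ioo, withDensity_indicator measurableSet_Ioo,
      withDensity_const, withDensity_const]
  have hTmeas : Measurable T := by
    rw [hT]
    exact Measurable.ite measurableSet_Iic (by fun_prop) (by fun_prop)
  -- translation pushforward: (volume.restrict (Ioo a b)).map (·+2) = volume.restrict (Ioo (a+2) (b+2))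
  have htrans : ∀ a b : ℝ, (volume.restrict (Ioo a b)).map (fun x => x + 2)
      = volume.restrict (Ioo (a+2) (b+2)) := by
    intro a b
    have h1 : (fun x : ℝ => x + 2) ⁻¹' Ioo (a+2) (b+2) = Ioo a b := by
      ext x
      simp only [mem_preimage, mem_Ioo]
      constructor <;> rintro ⟨u1, u2⟩ <;> exact ⟨by linarith, by linarith⟩
    have := Measure.restrict_map (measurable_add_const (2:ℝ)) (measurableSet_Ioo (a := a+2) (b := b+2))
      (μ := volume)
    rw [map_add_right_eq_self volume 2, h1] at this
    exact this.symm
  -- affine pushforward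
  have hmap2 : Measure.map (fun x : ℝ => β - 2 * x) volume
      = ENNReal.ofReal (1/2) • volume := by
    have hco : (fun x : ℝ => β - 2 * x) = (fun y : ℝ => β + y) ∘ (fun x : ℝ => (-2) * x) := by
      funext x; simp; ring
    rw [hco, ← Measure.map_map (by fun_prop) (by fun_prop),
      Real.map_volume_mul_left (by norm_num : (-2:ℝ) ≠ 0), Measure.map_smul,
      map_add_left_eq_self volume β]
    norm_num [abs_of_nonneg]
  have haff : (volume.restrict (Ioo (0:ℝ) 2)).map (fun x => β - 2 * x)
      = ENNReal.ofReal (1/2) • volume.restrict (Ioo (β-4) β) := by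
    have h1 : (fun x : ℝ => β - 2 * x) ⁻¹' Ioo (β-4) β = Ioo 0 2 := by
      ext x
      simp only [mem_preimage, mem_Ioo]
      constructor <;> rintro ⟨u1, u2⟩ <;> exact ⟨by linarith, by linarith⟩
    have := Measure.restrict_map (μ := volume) (f := fun x : ℝ => β - 2 * x)
      (by fun_prop) (measurableSet_Ioo (a := β-4) (b := β))
    rw [hmap2, h1, Measure.restrict_smul] at this
    exact this.symm
  -- split of the second interval at 0
  have hsplit : volume.restrict (Ioo (β-2) 2) =
      volume.restrict (Ioo (β-2) 0) + volume.restrict (Ioo (0:ℝ) 2) := by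
    rw [← Measure.restrict_union (by rw [Set.disjoint_left]; rintro x ⟨u1, u2⟩ ⟨v1, v2⟩; linarith)
      measurableSet_Ioo, Measure.restrict_congr_set]
    rw [← Ioc_union_Ioo_eq_Ioo (by linarith : β - 2 ≤ 0) (by norm_num : (0:ℝ) < 2)]
    exact (Ioo_ae_eq_Ioc.symm.union (Filter.EventuallyEq.refl _ _))
  -- T agrees with branches a.e. on each piece
  have hmapI₁ : (volume.restrict (Ioo (β-4) (β-2))).map T
      = volume.restrict (Ioo (β-2) β) := by
    have : (volume.restrict (Ioo (β-4) (β-2))).map T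
        = (volume.restrict (Ioo (β-4) (β-2))).map (fun x => x + 2) := by
      apply Measure.map_congr
      filter_upwards [ae_restrict_mem measurableSet_Ioo] with x hx
      rw [hT]; simp only []; rw [if_pos (by linarith [hx.2] : x ≤ 0)]
    rw [this, htrans, show β - 4 + 2 = β - 2 from by ring, show β - 2 + 2 = β from by ring]
  have hmapI₂a : (volume.restrict (Ioo (β-2) 0)).map T
      = volume.restrict (Ioo β 2) := by
    have : (volume.restrict (Ioo (β-2) 0)).map T
        = (volume.restrict (Ioo (β-2) 0)).map (fun x => x + 2) := by
      apply Measure.map_congr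
      filter_upwards [ae_restrict_mem measurableSet_Ioo] with x hx
      rw [hT]; simp only []; rw [if_pos (le_of_lt hx.2)]
    rw [this, htrans, show β - 2 + 2 = β from by ring, show (0:ℝ) + 2 = 2 from by norm_num]
  have hmapI₂b : (volume.restrict (Ioo (0:ℝ) 2)).map T
      = ENNReal.ofReal (1/2) • volume.restrict (Ioo (β-4) β) := by
    have : (volume.restrict (Ioo (0:ℝ) 2)).map T
        = (volume.restrict (Ioo (0:ℝ) 2)).map (fun x => β - 2 * x) := by
      apply Measure.map_congr
      filter_upwards [ae_restrict_mem measurableSet_Ioo] with x hx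
      rw [hT]; simp only []; rw [if_neg (not_le.mpr hx.1)]
    rw [this, haff]
  -- interval splits used to reassemble
  have hsplit2 : volume.restrict (Ioo (β-4) β) =
      volume.restrict (Ioo (β-4) (β-2)) + volume.restrict (Ioo (β-2) β) := by
    rw [← Measure.restrict_union (by rw [Set.disjoint_left]; rintro x ⟨u1, u2⟩ ⟨v1, v2⟩; linarith)
      measurableSet_Ioo, Measure.restrict_congr_set]
    rw [← Ioc_union_Ioo_eq_Ioo (by linarith : β - 4 ≤ β-2) (by linarith : β-2 < β)]
    exact (Ioo_ae_eq_Ioc.symm.union (Filter.EventuallyEq.refl _ _))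
  have hsplit3 : volume.restrict (Ioo (β-2) 2) =
      volume.restrict (Ioo (β-2) β) + volume.restrict (Ioo β 2) := by
    rw [← Measure.restrict_union (by rw [Set.disjoint_left]; rintro x ⟨u1, u2⟩ ⟨v1, v2⟩; linarith)
      measurableSet_Ioo, Measure.restrict_congr_set]
    rw [← Ioc_union_Ioo_eq_Ioo (by linarith : β - 2 ≤ β) (by linarith : β < 2)]
    exact (Ioo_ae_eq_Ioc.symm.union (Filter.EventuallyEq.refl _ _))
  have hchalf : c₂ * ENNReal.ofReal (1/2) = c₁ := by
    rw [hc₁, hc₂, ← ENNReal.ofReal_mul (by positivity)]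
    congr 1
    rw [div_mul_div_comm, one_mul, mul_comm]
  -- invariance
  have hinv : μ.map T = μ := by
    conv_lhs => rw [hμ', hsplit]
    rw [smul_add, Measure.map_add _ _ hTmeas, Measure.map_add _ _ hTmeas,
      Measure.map_smul, Measure.map_smul, Measure.map_smul,
      hmapI₁, hmapI₂a, hmapI₂b, smul_smul, hchalf, hsplit2, smul_add]
    conv_rhs => rw [hμ', hsplit3, smul_add]
    rw [← hcc, add_smul]
    abel_nf
    simp only [two_smul, two_mul, add_smul]
    abel
  refine ⟨?_, hinv, ?_⟩
  · constructor
    rw [hμ']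
    simp only [Measure.add_apply, Measure.smul_apply, smul_eq_mul,
      Measure.restrict_apply_univ, Real.volume_Ioo]
    rw [hc₁, hc₂,
      ← ENNReal.ofReal_mul (div_nonneg (by norm_num) (by linarith)),
      ← ENNReal.ofReal_mul (div_nonneg (by norm_num) (by linarith)),
      ← ENNReal.ofReal_add
        (mul_nonneg (div_nonneg (by norm_num) (by linarith)) (by norm_num))
        (mul_nonneg (div_nonneg (by norm_num) (by linarith)) (by linarith))]
    rw [show (β - 2 - (β-4)) = 2 by ring]
    rw [show 1/(2*(5-β)) * 2 + 1/(5-β) * (2 - (β-2)) = 1 by field_simp; ring]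
    exact ENNReal.ofReal_one
  · rw [hμ']
    simp only [Measure.add_apply, Measure.smul_apply, smul_eq_mul,
      Measure.restrict_apply measurableSet_Ioo]
    have e1 : Ioo (0:ℝ) 2 ∩ Ioo (β-4) (β-2) = ∅ := by
      ext x; simp [Set.mem_Ioo]; intro h1 _ _; linarith
    have e2 : Ioo (0:ℝ) 2 ∩ Ioo (β-2) 2 = Ioo 0 2 := by
      ext x; simp [Set.mem_Ioo]; intro h1 h2; exact ⟨by linarith, h2⟩
    rw [e1, e2]
    simp only [measure_empty, mul_zero, zero_add, Real.volume_Ioo]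
    rw [hc₂, ← ENNReal.ofReal_mul (div_nonneg (by norm_num) (by linarith))]
    norm_num
    congr 1
    rw [mul_comm, ← div_eq_mul_inv]
end

section
/- Let φ = (1+√5)/2, let 2φ < β < 4, and let T : ℝ → ℝ be defined by T(x) = x + 2 if x ≤ 0 and T(x) = β − φ·x if x > 0. Set A = 1/(10−4φ) and let μ be the measure on ℝ with density ρ with respect to Lebesgue measure, where ρ(x) = A/φ³ for x ∈ (β(1−φ), 2(β−2φ−1)), ρ(x) = A/φ² for x ∈ (2(β−2φ−1), β(1−φ)+2), ρ(x) = A/φ for x ∈ (β(1−φ)+2, β−2φ), ρ(x) = A for x ∈ (β−2φ, 2β−4φ), ρ(x) = A for x ∈ (2β−4φ, β(1−φ)+4), ρ(x) = (1/φ³ + 1)·A for x ∈ (β(1−φ)+4, 2), ρ(x) = A/φ for x ∈ (2, β(1−φ)+2φ²), ρ(x) = A/φ² for x ∈ (β(1−φ)+2φ², β), and ρ(x) = 0 otherwise. Then μ is a probability measure and μ is T-invariant. -/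
/-!
The push-forward of `f · volume` under `x ↦ if x ≤ 0 then x + a else b - c * x` has density
`f (y - a) 𝟙[y - a ≤ 0] + c⁻¹ f ((b - y) / c) 𝟙[(b - y) / c > 0]` (the transfer operator), so
invariance amounts to the fixed-point equation `ρ = L ρ` almost everywhere.

For `2φ < β < 4` the breakpoints of `ρ` (points of the `T`-orbits of `0` and of `β`) are
strictly increasing, hence `ρ` is a step function whose values are read off interval by interval.
Away from finitely many points, `x - 2` and `(β - x) / φ` fall into known plateaus, and each
instance of `ρ = L ρ` becomes an identity between `1, φ⁻¹, φ⁻², φ⁻³`, all consequences of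
`φ² = φ + 1`. The total mass is `∑ value × length = A (10 - 4φ)`.
-/

open MeasureTheory Set Real
open scoped ENNReal

theorem map_withDensity_of_leftInverse {α β : Type*} [MeasurableSpace α] [MeasurableSpace β]
    {g : α → β} {g' : β → α} (hg : Measurable g) (hg' : Measurable g')
    (hgg' : Function.LeftInverse g' g) (ν : Measure α) {f : α → ℝ≥0∞} (hf : Measurable f) :
    (ν.withDensity f).map g = (ν.map g).withDensity (f ∘ g') := by
  ext s hs
  rw [Measure.map_apply hg hs, withDensity_apply _ (hg hs), withDensity_apply _ hs,
    setLIntegral_map hs (hf.comp hg') hg]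
  exact setLIntegral_congr_fun (hg hs) fun x _ => by rw [Function.comp_apply, hgg' x]

theorem map_withDensity_add_const {f : ℝ → ℝ≥0∞} (hf : Measurable f) (a : ℝ) :
    (volume.withDensity f).map (· + a) = volume.withDensity fun y => f (y - a) := by
  rw [map_withDensity_of_leftInverse (measurable_add_const a) (measurable_sub_const a)
    (fun x => add_sub_cancel_right x a) _ hf, map_add_right_eq_self]
  rfl

theorem map_withDensity_sub_mul {f : ℝ → ℝ≥0∞} (hf : Measurable f) (b : ℝ) {c : ℝ} (hc : 0 < c) :
    (volume.withDensity f).map (fun x => b - c * x) =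
      volume.withDensity fun y => ENNReal.ofReal c⁻¹ * f ((b - y) / c) := by
  have hmap : volume.map (fun x : ℝ => b - c * x) = ENNReal.ofReal c⁻¹ • volume := by
    have hcomp : (fun x : ℝ => b - c * x) = (b + ·) ∘ (-c * ·) := by
      ext x
      simp only [Function.comp_apply]
      ring
    rw [hcomp, ← Measure.map_map (measurable_const_add b) (measurable_const_mul _),
      Real.map_volume_mul_left (by linarith), Measure.map_smul, map_add_left_eq_self,
      inv_neg, abs_neg, abs_inv, abs_of_pos hc]
  rw [map_withDensity_of_leftInverse (g' := fun y => (b - y) / c) (by fun_prop) (by fun_prop)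
    (fun x => by field_simp; ring) _ hf, hmap, withDensity_smul_measure,
    ← withDensity_smul _ (hf.comp (by fun_prop))]
  rfl

theorem map_withDensity_ite {f : ℝ → ℝ≥0∞} (hf : Measurable f) (a b : ℝ) {c : ℝ} (hc : 0 < c) :
    (volume.withDensity f).map (fun x => if x ≤ 0 then x + a else b - c * x) =
      volume.withDensity fun y =>
        (Iic 0).indicator f (y - a) + ENNReal.ofReal c⁻¹ * (Ioi 0).indicator f ((b - y) / c) := by
  set T := fun x : ℝ => if x ≤ 0 then x + a else b - c * x
  have hT : Measurable T := Measurable.ite measurableSet_Iic (by fun_prop) (by fun_prop)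
  have hrestrict (s : Set ℝ) (hs : MeasurableSet s) :
      (volume.withDensity f).restrict s = volume.withDensity (s.indicator f) := by
    rw [restrict_withDensity hs, withDensity_indicator hs]
  have hleft : ((volume.withDensity f).restrict (Iic 0)).map T =
      ((volume.withDensity f).restrict (Iic 0)).map (· + a) := by
    refine Measure.map_congr ?_
    filter_upwards [ae_restrict_mem measurableSet_Iic] with x hx using if_pos hx
  have hright : ((volume.withDensity f).restrict (Ioi 0)).map T =
      ((volume.withDensity f).restrict (Ioi 0)).map (fun x => b - c * x) := by
    refine Measure.map_congr ?_
    filter_upwards [ae_restrict_mem measurableSet_Ioi] with x hx using if_neg (not_le.2 hx)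
  rw [← Measure.restrict_add_restrict_compl (μ := volume.withDensity f) measurableSet_Iic,
    compl_Iic, Measure.map_add _ _ hT, hleft, hright, hrestrict _ measurableSet_Iic,
    hrestrict _ measurableSet_Ioi, map_withDensity_add_const (hf.indicator measurableSet_Iic),
    map_withDensity_sub_mul (hf.indicator measurableSet_Ioi) b hc]
  exact (withDensity_add_left
    ((hf.indicator measurableSet_Iic).comp (measurable_sub_const a)) _).symm

/-- The transfer (Perron–Frobenius) operator of `x ↦ if x ≤ 0 then x + a else b - c * x`
with respect to Lebesgue measure. -/
noncomputable def transferOperator (a b c : ℝ) (f : ℝ → ℝ) (y : ℝ) : ℝ :=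
  (Iic 0).indicator f (y - a) + c⁻¹ * (Ioi 0).indicator f ((b - y) / c)

theorem map_withDensity_ofReal_ite {f : ℝ → ℝ} (hf : Measurable f) (hf₀ : 0 ≤ f) (a b : ℝ)
    {c : ℝ} (hc : 0 < c) :
    (volume.withDensity fun x => ENNReal.ofReal (f x)).map
        (fun x => if x ≤ 0 then x + a else b - c * x) =
      volume.withDensity fun y => ENNReal.ofReal (transferOperator a b c f y) := by
  rw [map_withDensity_ite hf.ennreal_ofReal a b hc]
  congr 1
  ext y
  have hind (s : Set ℝ) (z : ℝ) :
      s.indicator (fun x => ENNReal.ofReal (f x)) z = ENNReal.ofReal (s.indicator f z) :=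
    congrFun (indicator_comp_of_zero (g := ENNReal.ofReal) ENNReal.ofReal_zero) z
  have hc' : 0 ≤ c⁻¹ := inv_nonneg.2 hc.le
  rw [transferOperator, hind, hind,
    ENNReal.ofReal_add (indicator_nonneg (fun x _ => hf₀ x) _)
      (mul_nonneg hc' (indicator_nonneg (fun x _ => hf₀ x) _)),
    ENNReal.ofReal_mul hc']

theorem transferOperator_of_le (f : ℝ → ℝ) {a b c y : ℝ} (hc : 0 < c) (ha : y ≤ a) (hb : y < b) :
    transferOperator a b c f y = f (y - a) + c⁻¹ * f ((b - y) / c) := by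
  rw [transferOperator, indicator_of_mem (by simpa using ha),
    indicator_of_mem (mem_Ioi.2 (div_pos (by linarith) hc))]

theorem transferOperator_of_lt (f : ℝ → ℝ) {a b c y : ℝ} (hc : 0 < c) (ha : a < y) (hb : y < b) :
    transferOperator a b c f y = c⁻¹ * f ((b - y) / c) := by
  rw [transferOperator, indicator_of_notMem (by simpa using ha),
    indicator_of_mem (mem_Ioi.2 (div_pos (by linarith) hc)), zero_add]

theorem transferOperator_of_lt_of_le (f : ℝ → ℝ) {a b c y : ℝ} (hc : 0 < c) (ha : a < y)
    (hb : b ≤ y) : transferOperator a b c f y = 0 := by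
  rw [transferOperator, indicator_of_notMem (by simpa using ha),
    indicator_of_notMem (by simpa using div_nonpos_of_nonpos_of_nonneg (by linarith) hc.le)]
  simp

theorem sub_div_mem_Ioo {b c x p q : ℝ} (hc : 0 < c) (hx : x ∈ Ioo (b - c * q) (b - c * p)) :
    (b - x) / c ∈ Ioo p q :=
  ⟨by rw [lt_div_iff₀ hc]; linarith [hx.2], by rw [div_lt_iff₀ hc]; linarith [hx.1]⟩

theorem sub_div_ne {b c x y : ℝ} (hc : c ≠ 0) (hx : x ≠ b - c * y) : (b - x) / c ≠ y := by
  rintro rfl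
  apply hx
  field_simp
  ring

theorem lintegral_ofReal_ite_Ioo {a b v : ℝ} {h : ℝ → ℝ} (hh : ∀ x ∈ Ioo a b, h x = 0) :
    ∫⁻ x, ENNReal.ofReal (if x ∈ Ioo a b then v else h x) =
      ENNReal.ofReal v * ENNReal.ofReal (b - a) + ∫⁻ x, ENNReal.ofReal (h x) := by
  have hsplit : (fun x => ENNReal.ofReal (if x ∈ Ioo a b then v else h x)) =
      fun x => (Ioo a b).indicator (fun _ => ENNReal.ofReal v) x + ENNReal.ofReal (h x) := by
    ext x
    by_cases hx : x ∈ Ioo a b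
    · simp [hx, hh x hx]
    · simp [hx]
  rw [hsplit, lintegral_add_left (measurable_const.indicator measurableSet_Ioo),
    lintegral_indicator_const measurableSet_Ioo, Real.volume_Ioo]

section Plateau

open scoped goldenRatio

lemma inv_goldenRatio_eq_sub_one : φ⁻¹ = φ - 1 := by
  rw [inv_goldenRatio, ← one_sub_goldenConj]
  ring

lemma div_goldenRatio (a : ℝ) : a / φ = a * (φ - 1) := by
  rw [div_eq_mul_inv, inv_goldenRatio_eq_sub_one]

lemma div_goldenRatio_sq (a : ℝ) : a / φ ^ 2 = a * (2 - φ) := by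
  rw [div_eq_mul_inv, ← inv_pow, inv_goldenRatio_eq_sub_one]
  linear_combination a * goldenRatio_sq

lemma div_goldenRatio_pow_three (a : ℝ) : a / φ ^ 3 = a * (2 * φ - 3) := by
  rw [div_eq_mul_inv, ← inv_pow, inv_goldenRatio_eq_sub_one]
  linear_combination a * (φ - 2) * goldenRatio_sq

noncomputable def plateauDensity (β A : ℝ) : ℝ → ℝ := fun x =>
  if x ∈ Ioo (β * (1 - φ)) (2 * (β - 2 * φ - 1)) then A / φ ^ 3
  else if x ∈ Ioo (2 * (β - 2 * φ - 1)) (β * (1 - φ) + 2) then A / φ ^ 2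
  else if x ∈ Ioo (β * (1 - φ) + 2) (β - 2 * φ) then A / φ
  else if x ∈ Ioo (β - 2 * φ) (2 * β - 4 * φ) then A
  else if x ∈ Ioo (2 * β - 4 * φ) (β * (1 - φ) + 4) then A
  else if x ∈ Ioo (β * (1 - φ) + 4) 2 then (1 / φ ^ 3 + 1) * A
  else if x ∈ Ioo (2 : ℝ) (β * (1 - φ) + 2 * φ ^ 2) then A / φ
  else if x ∈ Ioo (β * (1 - φ) + 2 * φ ^ 2) β then A / φ ^ 2
  else 0

variable {β : ℝ} (A : ℝ) {x : ℝ}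

lemma plateau_breakpoints_lt (hβ : β ∈ Ioo (2 * φ) 4) :
    β * (1 - φ) < 2 * (β - 2 * φ - 1) ∧ 2 * (β - 2 * φ - 1) < β * (1 - φ) + 2 ∧
      β * (1 - φ) + 2 < β - 2 * φ ∧ β - 2 * φ < 2 * β - 4 * φ ∧
      2 * β - 4 * φ < β * (1 - φ) + 4 ∧ β * (1 - φ) + 4 < 2 ∧ 2 < β * (1 - φ) + 2 * φ ^ 2 ∧
      β * (1 - φ) + 2 * φ ^ 2 < β := by
  have h₁ : 0 < (β - 2 * φ) * (φ - 1) :=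
    mul_pos (by linarith [hβ.1]) (by linarith [one_lt_goldenRatio])
  have h₂ : 0 < (β - 2 * φ) * (2 - φ) :=
    mul_pos (by linarith [hβ.1]) (by linarith [goldenRatio_lt_two])
  have h₃ : 0 < (4 - β) * (φ - 1) := mul_pos (by linarith [hβ.2]) (by linarith [one_lt_goldenRatio])
  have h₄ : 0 < (4 - β) * (2 - φ) := mul_pos (by linarith [hβ.2]) (by linarith [goldenRatio_lt_two])
  have := goldenRatio_sq
  refine ⟨?_, ?_, ?_, ?_, ?_, ?_, ?_, ?_⟩ <;> linarith

lemma measurable_plateauDensity : Measurable (plateauDensity β A) := by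
  unfold plateauDensity
  repeat refine Measurable.ite measurableSet_Ioo measurable_const ?_
  exact measurable_const

lemma plateauDensity_nonneg (hA : 0 ≤ A) : 0 ≤ plateauDensity β A := by
  intro x
  unfold plateauDensity
  split_ifs <;> positivity

lemma plateauDensity_of_le (hβ : β ∈ Ioo (2 * φ) 4) (hx : x ≤ β * (1 - φ)) :
    plateauDensity β A x = 0 := by
  have := plateau_breakpoints_lt hβ
  simp only [plateauDensity, mem_Ioo]
  split_ifs <;> first | rfl | (casesm* _ ∧ _; linarith)

lemma plateauDensity_of_ge (hβ : β ∈ Ioo (2 * φ) 4) (hx : β ≤ x) :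
    plateauDensity β A x = 0 := by
  have := plateau_breakpoints_lt hβ
  simp only [plateauDensity, mem_Ioo]
  split_ifs <;> first | rfl | (casesm* _ ∧ _; linarith)

lemma plateauDensity_of_mem_Ioo₁ (hx : x ∈ Ioo (β * (1 - φ)) (2 * (β - 2 * φ - 1))) :
    plateauDensity β A x = A / φ ^ 3 :=
  if_pos hx

lemma plateauDensity_of_mem_Ioo₂ (hβ : β ∈ Ioo (2 * φ) 4)
    (hx : x ∈ Ioo (2 * (β - 2 * φ - 1)) (β * (1 - φ) + 2)) :
    plateauDensity β A x = A / φ ^ 2 := by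
  have := plateau_breakpoints_lt hβ
  simp only [plateauDensity, mem_Ioo] at hx ⊢
  split_ifs <;> first | rfl | contradiction | (casesm* _ ∧ _; linarith)

lemma plateauDensity_of_mem_Ioo₃ (hβ : β ∈ Ioo (2 * φ) 4)
    (hx : x ∈ Ioo (β * (1 - φ) + 2) (β - 2 * φ)) : plateauDensity β A x = A / φ := by
  have := plateau_breakpoints_lt hβ
  simp only [plateauDensity, mem_Ioo] at hx ⊢
  split_ifs <;> first | rfl | contradiction | (casesm* _ ∧ _; linarith)

lemma plateauDensity_of_mem_Ioo₄₅ (hβ : β ∈ Ioo (2 * φ) 4)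
    (hx : x ∈ Ioo (β - 2 * φ) (β * (1 - φ) + 4)) (hx' : x ≠ 2 * β - 4 * φ) :
    plateauDensity β A x = A := by
  have := plateau_breakpoints_lt hβ
  obtain h | h := lt_or_gt_of_ne hx'
  · have h₄ : x ∈ Ioo (β - 2 * φ) (2 * β - 4 * φ) := ⟨hx.1, h⟩
    simp only [plateauDensity, mem_Ioo] at hx h₄ ⊢
    split_ifs <;> first | rfl | contradiction | (casesm* _ ∧ _; linarith)
  · have h₅ : x ∈ Ioo (2 * β - 4 * φ) (β * (1 - φ) + 4) := ⟨h, hx.2⟩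
    simp only [plateauDensity, mem_Ioo] at hx h₅ ⊢
    split_ifs <;> first | rfl | contradiction | (casesm* _ ∧ _; linarith)

lemma plateauDensity_of_mem_Ioo₆ (hβ : β ∈ Ioo (2 * φ) 4)
    (hx : x ∈ Ioo (β * (1 - φ) + 4) 2) : plateauDensity β A x = (1 / φ ^ 3 + 1) * A := by
  have := plateau_breakpoints_lt hβ
  simp only [plateauDensity, mem_Ioo] at hx ⊢
  split_ifs <;> first | rfl | contradiction | (casesm* _ ∧ _; linarith)

lemma plateauDensity_of_mem_Ioo₇ (hβ : β ∈ Ioo (2 * φ) 4)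
    (hx : x ∈ Ioo 2 (β * (1 - φ) + 2 * φ ^ 2)) : plateauDensity β A x = A / φ := by
  have := plateau_breakpoints_lt hβ
  simp only [plateauDensity, mem_Ioo] at hx ⊢
  split_ifs <;> first | rfl | contradiction | (casesm* _ ∧ _; linarith)

lemma plateauDensity_of_mem_Ioo₈ (hβ : β ∈ Ioo (2 * φ) 4)
    (hx : x ∈ Ioo (β * (1 - φ) + 2 * φ ^ 2) β) : plateauDensity β A x = A / φ ^ 2 := by
  have := plateau_breakpoints_lt hβ
  simp only [plateauDensity, mem_Ioo] at hx ⊢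
  split_ifs <;> first | rfl | contradiction | (casesm* _ ∧ _; linarith)

lemma plateauDensity_eq_transferOperator_of_lt (hβ : β ∈ Ioo (2 * φ) 4)
    (hx : x < β * (1 - φ) + 2) (h₀ : x ≠ β * (1 - φ)) (h₁ : x ≠ 2 * (β - 2 * φ - 1)) :
    plateauDensity β A x = transferOperator 2 β φ (plateauDensity β A) x := by
  obtain ⟨h₀₁, h₁₂, h₂₃, h₃₄, h₄₅, h₅₆, h₆₇, h₇₈⟩ := plateau_breakpoints_lt hβ
  have hφ := goldenRatio_pos
  have hβφ : β * φ ^ 2 = β * φ + β := by linear_combination β * goldenRatio_sq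
  have hφ3 : φ ^ 3 = 2 * φ + 1 := by linear_combination (φ + 1) * goldenRatio_sq
  rw [transferOperator_of_le _ hφ (by linarith) (by linarith),
    plateauDensity_of_le A hβ (x := x - 2) (by linarith)]
  rcases lt_or_gt_of_ne h₀ with h₀ | h₀
  · rw [plateauDensity_of_le A hβ h₀.le,
      plateauDensity_of_ge A hβ (by rw [le_div_iff₀ hφ]; linarith)]
    ring
  rcases lt_or_gt_of_ne h₁ with h₁ | h₁
  · rw [plateauDensity_of_mem_Ioo₁ A ⟨h₀, h₁⟩,
      plateauDensity_of_mem_Ioo₈ A hβ (sub_div_mem_Ioo hφ ⟨by linarith, by linarith⟩)]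
    simp only [div_goldenRatio_sq, div_goldenRatio_pow_three, inv_goldenRatio_eq_sub_one]
    linear_combination A * goldenRatio_sq
  · rw [plateauDensity_of_mem_Ioo₂ A hβ ⟨h₁, hx⟩,
      plateauDensity_of_mem_Ioo₇ A hβ (sub_div_mem_Ioo hφ ⟨by linarith, by linarith⟩)]
    simp only [div_goldenRatio, div_goldenRatio_sq, inv_goldenRatio_eq_sub_one]
    linear_combination (-A) * goldenRatio_sq

lemma plateauDensity_eq_transferOperator_of_mem_Ioo (hβ : β ∈ Ioo (2 * φ) 4)
    (hx : x ∈ Ioo (β * (1 - φ) + 2) 2) (h₃ : x ≠ β - 2 * φ) (h₄ : x ≠ 2 * β - 4 * φ)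
    (h₅ : x ≠ β * (1 - φ) + 4) (hc : x ≠ β - φ * (2 * β - 4 * φ)) :
    plateauDensity β A x = transferOperator 2 β φ (plateauDensity β A) x := by
  obtain ⟨h₀₁, h₁₂, h₂₃, h₃₄, h₄₅, h₅₆, h₆₇, h₇₈⟩ := plateau_breakpoints_lt hβ
  have hφ := goldenRatio_pos
  have hβφ : β * φ ^ 2 = β * φ + β := by linear_combination β * goldenRatio_sq
  have hφ3 : φ ^ 3 = 2 * φ + 1 := by linear_combination (φ + 1) * goldenRatio_sq
  have hfold := sub_div_ne goldenRatio_ne_zero hc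
  obtain ⟨h₂, h₆⟩ := hx
  rw [transferOperator_of_le _ hφ (by linarith) (by linarith)]
  rcases lt_or_gt_of_ne h₃ with h₃ | h₃
  · rw [plateauDensity_of_mem_Ioo₃ A hβ ⟨h₂, h₃⟩,
      plateauDensity_of_mem_Ioo₁ A ⟨by linarith, by linarith [hβ.1]⟩,
      plateauDensity_of_mem_Ioo₇ A hβ (sub_div_mem_Ioo hφ ⟨by linarith, by linarith⟩)]
    simp only [div_goldenRatio, div_goldenRatio_pow_three, inv_goldenRatio_eq_sub_one]
    linear_combination (-A) * goldenRatio_sq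
  rcases lt_or_gt_of_ne h₄ with h₄ | h₄
  · rw [plateauDensity_of_mem_Ioo₄₅ A hβ ⟨h₃, by linarith⟩ h₄.ne,
      plateauDensity_of_mem_Ioo₁ A ⟨by linarith, by linarith⟩,
      plateauDensity_of_mem_Ioo₆ A hβ (sub_div_mem_Ioo hφ ⟨by linarith, by linarith⟩)]
    simp only [div_goldenRatio_pow_three, inv_goldenRatio_eq_sub_one]
    linear_combination (-2 * A) * goldenRatio_sq
  rcases lt_or_gt_of_ne h₅ with h₅ | h₅
  · rw [plateauDensity_of_mem_Ioo₄₅ A hβ ⟨by linarith, h₅⟩ h₄.ne',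
      plateauDensity_of_mem_Ioo₂ A hβ ⟨by linarith, by linarith⟩,
      plateauDensity_of_mem_Ioo₄₅ A hβ (sub_div_mem_Ioo hφ ⟨by linarith, by linarith⟩) hfold]
    simp only [div_goldenRatio_sq, inv_goldenRatio_eq_sub_one]
    ring
  · rw [plateauDensity_of_mem_Ioo₆ A hβ ⟨h₅, h₆⟩,
      plateauDensity_of_mem_Ioo₃ A hβ ⟨by linarith, by linarith⟩,
      plateauDensity_of_mem_Ioo₄₅ A hβ (sub_div_mem_Ioo hφ ⟨by linarith, by linarith⟩) hfold]
    simp only [div_goldenRatio, div_goldenRatio_pow_three, inv_goldenRatio_eq_sub_one]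
    ring

lemma plateauDensity_eq_transferOperator_of_two_lt (hβ : β ∈ Ioo (2 * φ) 4) (hx : 2 < x)
    (h₇ : x ≠ β * (1 - φ) + 2 * φ ^ 2) (h₈ : x ≠ β) (hc : x ≠ β - φ * (2 * β - 4 * φ)) :
    plateauDensity β A x = transferOperator 2 β φ (plateauDensity β A) x := by
  obtain ⟨h₀₁, h₁₂, h₂₃, h₃₄, h₄₅, h₅₆, h₆₇, h₇₈⟩ := plateau_breakpoints_lt hβ
  have hφ := goldenRatio_pos
  have hβφ : β * φ ^ 2 = β * φ + β := by linear_combination β * goldenRatio_sq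
  rcases lt_or_gt_of_ne h₇ with h₇ | h₇
  · rw [transferOperator_of_lt _ hφ hx (by linarith), plateauDensity_of_mem_Ioo₇ A hβ ⟨hx, h₇⟩,
      plateauDensity_of_mem_Ioo₄₅ A hβ (sub_div_mem_Ioo hφ ⟨by linarith, by linarith⟩)
        (sub_div_ne goldenRatio_ne_zero hc),
      div_goldenRatio, inv_goldenRatio_eq_sub_one]
    ring
  rcases lt_or_gt_of_ne h₈ with h₈ | h₈
  · rw [transferOperator_of_lt _ hφ hx h₈, plateauDensity_of_mem_Ioo₈ A hβ ⟨h₇, h₈⟩,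
      plateauDensity_of_mem_Ioo₃ A hβ (sub_div_mem_Ioo hφ ⟨by linarith, by linarith⟩)]
    simp only [div_goldenRatio, div_goldenRatio_sq, inv_goldenRatio_eq_sub_one]
    linear_combination (-A) * goldenRatio_sq
  · rw [transferOperator_of_lt_of_le _ hφ hx h₈.le, plateauDensity_of_ge A hβ h₈.le]

lemma plateauDensity_ae_eq_transferOperator (hβ : β ∈ Ioo (2 * φ) 4) :
    plateauDensity β A =ᵐ[volume] transferOperator 2 β φ (plateauDensity β A) := by
  -- the breakpoints of `plateauDensity` and the image of `2β - 4φ` under `x ↦ β - φ * x`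
  have hfinite : ({β * (1 - φ), 2 * (β - 2 * φ - 1), β * (1 - φ) + 2, β - 2 * φ, 2 * β - 4 * φ,
      β * (1 - φ) + 4, 2, β * (1 - φ) + 2 * φ ^ 2, β, β - φ * (2 * β - 4 * φ)} : Set ℝ).Finite :=
    toFinite _
  filter_upwards [hfinite.countable.ae_notMem volume] with x hx
  simp only [mem_insert_iff, mem_singleton_iff, not_or] at hx
  obtain ⟨h₀, h₁, h₂, h₃, h₄, h₅, h₆, h₇, h₈, hc⟩ := hx
  rcases lt_or_gt_of_ne h₂ with h₂ | h₂
  · exact plateauDensity_eq_transferOperator_of_lt A hβ h₂ h₀ h₁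
  rcases lt_or_gt_of_ne h₆ with h₆ | h₆
  · exact plateauDensity_eq_transferOperator_of_mem_Ioo A hβ ⟨h₂, h₆⟩ h₃ h₄ h₅ hc
  · exact plateauDensity_eq_transferOperator_of_two_lt A hβ h₆ h₇ h₈ hc

lemma lintegral_ofReal_plateauDensity (hβ : β ∈ Ioo (2 * φ) 4) (hA : 0 ≤ A) :
    ∫⁻ x, ENNReal.ofReal (plateauDensity β A x) = ENNReal.ofReal (A * (10 - 4 * φ)) := by
  obtain ⟨h₀₁, h₁₂, h₂₃, h₃₄, h₄₅, h₅₆, h₆₇, h₇₈⟩ := plateau_breakpoints_lt hβ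
  simp only [plateauDensity]
  rw [lintegral_ofReal_ite_Ioo, lintegral_ofReal_ite_Ioo, lintegral_ofReal_ite_Ioo,
    lintegral_ofReal_ite_Ioo, lintegral_ofReal_ite_Ioo, lintegral_ofReal_ite_Ioo,
    lintegral_ofReal_ite_Ioo, lintegral_ofReal_ite_Ioo, ENNReal.ofReal_zero, lintegral_zero,
    add_zero]
  · simp (disch := positivity) only [← ENNReal.ofReal_mul]
    repeat rw [← ENNReal.ofReal_add (by positivity) (by positivity)]
    congr 1
    simp only [div_goldenRatio, div_goldenRatio_sq, div_goldenRatio_pow_three]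
    linear_combination A * (4 * φ + 4 * β - 16) * goldenRatio_sq
  all_goals
    intro x hx
    simp only [mem_Ioo] at hx ⊢
    try split_ifs <;> first | rfl | (casesm* _ ∧ _; linarith)

end Plateau

theorem invariant_density_s_phi_plateau (φ β A : ℝ) (hφ : φ = (1 + Real.sqrt 5) / 2)
    (hβ₁ : 2 * φ < β) (hβ₂ : β < 4) (hA : A = 1 / (10 - 4 * φ))
    (T : ℝ → ℝ) (hT : T = fun x => if x ≤ 0 then x + 2 else β - φ * x)
    (ρ : ℝ → ENNReal)
    (hρ : ρ = fun x =>
      if x ∈ Ioo (β * (1 - φ)) (2 * (β - 2 * φ - 1)) then ENNReal.ofReal (A / φ ^ 3)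
      else if x ∈ Ioo (2 * (β - 2 * φ - 1)) (β * (1 - φ) + 2) then ENNReal.ofReal (A / φ ^ 2)
      else if x ∈ Ioo (β * (1 - φ) + 2) (β - 2 * φ) then ENNReal.ofReal (A / φ)
      else if x ∈ Ioo (β - 2 * φ) (2 * β - 4 * φ) then ENNReal.ofReal A
      else if x ∈ Ioo (2 * β - 4 * φ) (β * (1 - φ) + 4) then ENNReal.ofReal A
      else if x ∈ Ioo (β * (1 - φ) + 4) 2 then ENNReal.ofReal ((1 / φ ^ 3 + 1) * A)
      else if x ∈ Ioo (2 : ℝ) (β * (1 - φ) + 2 * φ ^ 2) then ENNReal.ofReal (A / φ)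
      else if x ∈ Ioo (β * (1 - φ) + 2 * φ ^ 2) β then ENNReal.ofReal (A / φ ^ 2)
      else 0)
    (μ : Measure ℝ) (hμ : μ = volume.withDensity ρ) :
    IsProbabilityMeasure μ ∧ μ.map T = μ := by
  obtain rfl : φ = goldenRatio := hφ
  have hβ : β ∈ Ioo (2 * goldenRatio) 4 := ⟨hβ₁, hβ₂⟩
  have hmass : 0 < 10 - 4 * goldenRatio := by linarith [goldenRatio_lt_two]
  have hA₀ : 0 ≤ A := hA ▸ by positivity
  have hρ' : ρ = fun x => ENNReal.ofReal (plateauDensity β A x) := by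
    rw [hρ]
    ext x
    simp only [plateauDensity]
    split_ifs <;> simp
  subst hT hμ hρ'
  refine ⟨⟨?_⟩, ?_⟩
  · rw [withDensity_apply _ MeasurableSet.univ, Measure.restrict_univ,
      lintegral_ofReal_plateauDensity A hβ hA₀, hA, one_div_mul_cancel hmass.ne',
      ENNReal.ofReal_one]
  · rw [map_withDensity_ofReal_ite (measurable_plateauDensity A) (plateauDensity_nonneg A hA₀) 2 β
      goldenRatio_pos]
    exact withDensity_congr_ae
      ((plateauDensity_ae_eq_transferOperator A hβ).fun_comp ENNReal.ofReal).symm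
end

section
/- Let φ = (1+√5)/2, let 2φ < β < 4, and let T : ℝ → ℝ be defined by T(x) = x + 2 if x ≤ 0 and T(x) = β − φ·x if x > 0. Then there exists a T-invariant Borel probability measure μ on ℝ, absolutely continuous with respect to Lebesgue measure, such that the Lyapunov exponent of T with respect to μ satisfies ∫ log |deriv T(x)| dμ(x) = ((3−φ)/(5−2φ))·log φ. In particular this value is independent of β in the range (2φ, 4). -/
/-!
For `s = φ` the two one-sided images of the discontinuity, `T(0⁻) = 2` and `T(0⁺) = β`, have
orbits that meet after four steps: `T⁴ β = T⁴ 2`, because `φ² = φ + 1`. The eight points of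
these orbits before the meeting point, together with `0` and the meeting point, cut `(T β, β]`
into intervals that `T` maps onto unions of such intervals, and the step density with weights
`1, φ, φ², φ², φ³, φ³, 2φ², φ², φ` on them is invariant: the left branch translates by `2`
without changing the density, the right branch divides it by `φ`. This measure has mass
`8φ + 2`, of which `6φ + 2` lies on `(0, ∞)`, where `|T'| = φ`; so the Lyapunov exponent of its
normalisation is `(6φ + 2)/(8φ + 2) · log φ = (3 - φ)/(5 - 2φ) · log φ`, whatever `β` is.
-/

open MeasureTheory Set
open scoped NNReal

noncomputable section

def intervalMeasure (a b : ℝ) : Measure ℝ := volume.restrict (Ioc a b)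

namespace intervalMeasure

instance (a b : ℝ) : IsFiniteMeasure (intervalMeasure a b) := by
  unfold intervalMeasure; infer_instance

theorem absolutelyContinuous (a b : ℝ) : intervalMeasure a b ≪ volume :=
  Measure.absolutelyContinuous_of_le Measure.restrict_le_self

theorem add_intervalMeasure {a b c : ℝ} (hab : a ≤ b) (hbc : b ≤ c) :
    intervalMeasure a b + intervalMeasure b c = intervalMeasure a c := by
  rw [intervalMeasure, intervalMeasure, intervalMeasure, ← Ioc_union_Ioc_eq_Ioc hab hbc,
    Measure.restrict_union (Ioc_disjoint_Ioc_of_le le_rfl) measurableSet_Ioc]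

theorem real_univ {a b : ℝ} (hab : a ≤ b) : (intervalMeasure a b).real univ = b - a := by
  simp [intervalMeasure, measureReal_def, hab]

theorem restrict_Ioi_of_le {a b c : ℝ} (hbc : b ≤ c) :
    (intervalMeasure a b).restrict (Ioi c) = 0 := by
  have hdisj : Disjoint (Ioi c) (Ioc a b) :=
    disjoint_left.mpr fun x hxc hx => (hx.2.trans hbc).not_gt hxc
  rw [Measure.restrict_eq_zero, intervalMeasure, Measure.restrict_apply measurableSet_Ioi,
    hdisj.inter_eq, measure_empty]

theorem restrict_Ioi_of_ge {a b c : ℝ} (hca : c ≤ a) :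
    (intervalMeasure a b).restrict (Ioi c) = intervalMeasure a b := by
  rw [intervalMeasure, Measure.restrict_restrict measurableSet_Ioi,
    inter_eq_right.mpr fun x hx => mem_Ioi.mpr (hca.trans_lt hx.1)]

theorem map_add_const (a b c : ℝ) :
    (intervalMeasure a b).map (· + c) = intervalMeasure (a + c) (b + c) := by
  have hf : Measurable (· + c : ℝ → ℝ) := measurable_add_const c
  calc (volume.restrict (Ioc a b)).map (· + c)
      _ = (volume.restrict ((· + c) ⁻¹' Ioc (a + c) (b + c))).map (· + c) := by
        rw [preimage_add_const_Ioc, add_sub_cancel_right, add_sub_cancel_right]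
      _ = (volume.map (· + c)).restrict (Ioc (a + c) (b + c)) :=
        (Measure.restrict_map hf measurableSet_Ioc).symm
      _ = volume.restrict (Ioc (a + c) (b + c)) := by rw [map_add_right_eq_self]

theorem map_const_sub_mul {s : ℝ} (hs : 0 < s) (a b c : ℝ) :
    (intervalMeasure a b).map (fun x => c - s * x)
      = s.toNNReal⁻¹ • intervalMeasure (c - s * b) (c - s * a) := by
  have hf : Measurable (fun x : ℝ => c - s * x) := by fun_prop
  have hvol : volume.map (fun x : ℝ => c - s * x) = s.toNNReal⁻¹ • volume := by
    have hcomp : (fun x : ℝ => c - s * x) = (c + ·) ∘ ((-s) * ·) := by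
      funext x; simp only [Function.comp_apply]; ring
    rw [hcomp, ← Measure.map_map (measurable_const_add c) (measurable_const_mul _),
      Real.map_volume_mul_left (neg_ne_zero.mpr hs.ne'), Measure.map_smul, map_add_left_eq_self,
      ENNReal.smul_def, inv_neg, abs_neg, abs_of_pos (inv_pos.mpr hs), ENNReal.ofReal,
      Real.toNNReal_inv]
  have hpre : (fun x : ℝ => c - s * x) ⁻¹' Ioc (c - s * b) (c - s * a) = Ico a b := by
    ext x
    simp only [mem_preimage, mem_Ioc, mem_Ico, sub_lt_sub_iff_left, sub_le_sub_iff_left,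
      mul_lt_mul_iff_right₀ hs, mul_le_mul_iff_right₀ hs]
    exact and_comm
  rw [intervalMeasure, intervalMeasure, ← Measure.restrict_congr_set Ico_ae_eq_Ioc, ← hpre,
    ← Measure.restrict_map hf measurableSet_Ioc, hvol, Measure.restrict_smul]

end intervalMeasure

def shiftReflect (β s x : ℝ) : ℝ := if x ≤ 0 then x + 2 else β - s * x

namespace shiftReflect

variable (β s : ℝ)

theorem measurable : Measurable (shiftReflect β s) :=
  Measurable.ite measurableSet_Iic (by fun_prop) (by fun_prop)

theorem map_intervalMeasure_of_nonpos {a b : ℝ} (hb : b ≤ 0) :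
    (intervalMeasure a b).map (shiftReflect β s) = intervalMeasure (a + 2) (b + 2) := by
  rw [← intervalMeasure.map_add_const]
  refine Measure.map_congr ?_
  filter_upwards [ae_restrict_mem measurableSet_Ioc] with x hx
  exact if_pos (hx.2.trans hb)

theorem map_intervalMeasure_of_nonneg {s : ℝ} (hs : 0 < s) {a b : ℝ} (ha : 0 ≤ a) :
    (intervalMeasure a b).map (shiftReflect β s)
      = s.toNNReal⁻¹ • intervalMeasure (β - s * b) (β - s * a) := by
  rw [← intervalMeasure.map_const_sub_mul hs]
  refine Measure.map_congr ?_
  filter_upwards [ae_restrict_mem measurableSet_Ioc] with x hx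
  exact if_neg (ha.trans_lt hx.1).not_ge

theorem deriv_of_neg {x : ℝ} (hx : x < 0) : deriv (shiftReflect β s) x = 1 := by
  have hloc : shiftReflect β s =ᶠ[nhds x] (· + 2) := by
    filter_upwards [Iio_mem_nhds hx] with y hy
    exact if_pos (le_of_lt hy)
  rw [hloc.deriv_eq, deriv_add_const, deriv_id'']

theorem deriv_of_pos {x : ℝ} (hx : 0 < x) : deriv (shiftReflect β s) x = -s := by
  have hloc : shiftReflect β s =ᶠ[nhds x] (fun y => β - s * y) := by
    filter_upwards [Ioi_mem_nhds hx] with y hy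
    exact if_neg (not_le.mpr hy)
  have hderiv : HasDerivAt (fun y => β - s * y) (-s) x := by
    simpa using ((hasDerivAt_id x).const_mul s).const_sub β
  rw [hloc.deriv_eq, hderiv.deriv]

theorem integral_log_abs_deriv {μ : Measure ℝ} (h0 : μ {0} = 0) :
    ∫ x, Real.log |deriv (shiftReflect β s) x| ∂μ = μ.real (Ioi 0) * Real.log s := by
  have hae : (fun x => Real.log |deriv (shiftReflect β s) x|)
      =ᵐ[μ] (Ioi 0).indicator fun _ => Real.log s := by
    filter_upwards [measure_eq_zero_iff_ae_notMem.mp h0] with x hx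
    rcases lt_or_gt_of_ne hx with hneg | hpos
    · rw [deriv_of_neg β s hneg, indicator_of_notMem (s := Ioi 0) (not_lt.mpr hneg.le)]
      simp
    · rw [deriv_of_pos β s hpos, indicator_of_mem (s := Ioi 0) hpos, abs_neg, Real.log_abs]
  rw [integral_congr_ae hae, integral_indicator_const _ measurableSet_Ioi, smul_eq_mul]

end shiftReflect

namespace GoldenPlateau

open Real goldenRatio

local notation "φ₊" => Real.toNNReal goldenRatio

variable (β : ℝ)

-- With `T = shiftReflect β φ`: `bₖ = Tᵏ β`, `cₖ = Tᵏ 2` and `m = T c₃`; `matching` says `T b₃ = m`.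
def b₁ : ℝ := β - φ * β
def b₂ : ℝ := b₁ β + 2
def b₃ : ℝ := b₂ β + 2
def c₁ : ℝ := β - φ * 2
def c₂ : ℝ := β - φ * c₁ β
def c₃ : ℝ := β - φ * c₂ β
def m : ℝ := c₃ β + 2

theorem matching : β - φ * b₃ β = m β := by
  simp only [b₁, b₂, b₃, c₁, c₂, c₃, m]
  linear_combination 2 * (φ + 1) * goldenRatio_sq

def measureLeft : Measure ℝ :=
  intervalMeasure (b₁ β) (c₃ β) + φ₊ • intervalMeasure (c₃ β) (b₂ β)
    + φ₊ ^ 2 • intervalMeasure (b₂ β) 0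

def measureRight : Measure ℝ :=
  φ₊ ^ 2 • intervalMeasure 0 (c₁ β) + φ₊ ^ 3 • intervalMeasure (c₁ β) (b₃ β)
    + (2 * φ₊ ^ 2) • intervalMeasure (b₃ β) 2 + φ₊ ^ 2 • intervalMeasure 2 (c₂ β)
    + φ₊ • intervalMeasure (c₂ β) β

def invariantMeasure : Measure ℝ := measureLeft β + measureRight β

instance : IsFiniteMeasure (measureLeft β) := by unfold measureLeft; infer_instance

instance : IsFiniteMeasure (measureRight β) := by unfold measureRight; infer_instance

instance : IsFiniteMeasure (invariantMeasure β) := by unfold invariantMeasure; infer_instance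

variable {β}

theorem breakpoints_lt (h₁ : 2 * φ < β) (h₂ : β < 4) :
    b₁ β < c₃ β ∧ c₃ β < b₂ β ∧ b₂ β < 0 ∧ 0 < c₁ β ∧ c₁ β < m β ∧ m β < b₃ β ∧
      b₃ β < 2 ∧ 2 < c₂ β ∧ c₂ β < β := by
  have hsq := goldenRatio_sq
  have hgt := one_lt_goldenRatio
  have hlt := goldenRatio_lt_two
  simp only [b₁, b₂, b₃, c₁, c₂, c₃, m]
  refine ⟨?_, ?_, ?_, ?_, ?_, ?_, ?_, ?_, ?_⟩ <;> nlinarith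

theorem map_measureLeft (h₁ : 2 * φ < β) (h₂ : β < 4) :
    (measureLeft β).map (shiftReflect β φ) = intervalMeasure (b₂ β) (m β)
      + φ₊ • intervalMeasure (m β) (b₃ β) + φ₊ ^ 2 • intervalMeasure (b₃ β) 2 := by
  obtain ⟨-, hc₃b₂, hb₂, -⟩ := breakpoints_lt h₁ h₂
  have hT := shiftReflect.measurable β φ
  rw [measureLeft, Measure.map_add _ _ hT, Measure.map_add _ _ hT, Measure.map_smul,
    Measure.map_smul, shiftReflect.map_intervalMeasure_of_nonpos β φ (hc₃b₂.trans hb₂).le,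
    shiftReflect.map_intervalMeasure_of_nonpos β φ hb₂.le,
    shiftReflect.map_intervalMeasure_of_nonpos β φ le_rfl, zero_add]
  rfl

theorem map_measureRight (h₁ : 2 * φ < β) (h₂ : β < 4) :
    (measureRight β).map (shiftReflect β φ) = φ₊ • intervalMeasure (c₂ β) β
      + φ₊ ^ 2 • intervalMeasure (m β) (c₂ β) + (2 * φ₊) • intervalMeasure (c₁ β) (m β)
      + φ₊ • intervalMeasure (c₃ β) (c₁ β) + intervalMeasure (b₁ β) (c₃ β) := by
  obtain ⟨-, -, -, hc₁, hc₁m, hmb₃, -, hc₂, -⟩ := breakpoints_lt h₁ h₂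
  have hφ : 0 < φ := goldenRatio_pos
  have hT := shiftReflect.measurable β φ
  simp only [measureRight, Measure.map_add _ _ hT, Measure.map_smul, smul_smul,
    shiftReflect.map_intervalMeasure_of_nonneg β hφ le_rfl,
    shiftReflect.map_intervalMeasure_of_nonneg β hφ hc₁.le,
    shiftReflect.map_intervalMeasure_of_nonneg β hφ (hc₁.trans hc₁m |>.trans hmb₃).le,
    shiftReflect.map_intervalMeasure_of_nonneg β hφ zero_le_two,
    shiftReflect.map_intervalMeasure_of_nonneg β hφ (zero_le_two.trans hc₂.le),
    matching, mul_zero, sub_zero]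
  simp only [b₁, c₁, c₂, c₃]
  have hφ_ne : φ₊ ≠ 0 := (Real.toNNReal_pos.mpr hφ).ne'
  match_scalars <;> field_simp

theorem map_invariantMeasure (h₁ : 2 * φ < β) (h₂ : β < 4) :
    (invariantMeasure β).map (shiftReflect β φ) = invariantMeasure β := by
  obtain ⟨-, hc₃b₂, hb₂, hc₁, hc₁m, hmb₃, hb₃, hc₂, -⟩ := breakpoints_lt h₁ h₂
  rw [invariantMeasure, Measure.map_add _ _ (shiftReflect.measurable β φ),
    map_measureLeft h₁ h₂, map_measureRight h₁ h₂, measureLeft, measureRight,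
    ← intervalMeasure.add_intervalMeasure hb₂.le (hc₁.trans hc₁m).le,
    ← intervalMeasure.add_intervalMeasure hc₁.le hc₁m.le,
    ← intervalMeasure.add_intervalMeasure hmb₃.le (hb₃.trans hc₂).le,
    ← intervalMeasure.add_intervalMeasure hb₃.le hc₂.le,
    ← intervalMeasure.add_intervalMeasure hc₃b₂.le (hb₂.trans hc₁).le,
    ← intervalMeasure.add_intervalMeasure hb₂.le hc₁.le,
    ← intervalMeasure.add_intervalMeasure hc₁m.le hmb₃.le]
  have hφ := goldenRatio_pos
  match_scalars <;>
  · apply NNReal.eq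
    push_cast [Real.coe_toNNReal _ hφ.le]
    grind

theorem absolutelyContinuous_invariantMeasure : invariantMeasure β ≪ volume := by
  unfold invariantMeasure measureLeft measureRight
  repeat' first
    | apply Measure.AbsolutelyContinuous.add_left
    | apply Measure.AbsolutelyContinuous.smul_left
    | apply intervalMeasure.absolutelyContinuous

theorem measureLeft_real_univ (h₁ : 2 * φ < β) (h₂ : β < 4) :
    (measureLeft β).real univ = 2 * φ := by
  obtain ⟨hb₁c₃, hc₃b₂, hb₂, -⟩ := breakpoints_lt h₁ h₂
  rw [measureLeft, measureReal_add_apply, measureReal_add_apply]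
  simp only [measureReal_nnreal_smul_apply,
    intervalMeasure.real_univ hb₁c₃.le, intervalMeasure.real_univ hc₃b₂.le,
    intervalMeasure.real_univ hb₂.le, NNReal.coe_pow, Real.coe_toNNReal _ goldenRatio_pos.le]
  simp only [b₁, b₂, c₁, c₂, c₃]
  linear_combination 2 * φ ^ 2 * goldenRatio_sq

theorem measureRight_real_univ (h₁ : 2 * φ < β) (h₂ : β < 4) :
    (measureRight β).real univ = 6 * φ + 2 := by
  obtain ⟨-, -, -, hc₁, hc₁m, hmb₃, hb₃, hc₂, hc₂β⟩ := breakpoints_lt h₁ h₂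
  rw [measureRight, measureReal_add_apply, measureReal_add_apply, measureReal_add_apply,
    measureReal_add_apply]
  simp only [measureReal_nnreal_smul_apply,
    intervalMeasure.real_univ hc₁.le, intervalMeasure.real_univ (hc₁m.trans hmb₃).le,
    intervalMeasure.real_univ hb₃.le, intervalMeasure.real_univ hc₂.le,
    intervalMeasure.real_univ hc₂β.le, NNReal.coe_pow, NNReal.coe_mul, NNReal.coe_ofNat,
    Real.coe_toNNReal _ goldenRatio_pos.le]
  simp only [b₁, b₂, b₃, c₁, c₂]
  linear_combination (4 * φ ^ 2 + 4 * φ + 2 - β * φ ^ 2) * goldenRatio_sq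

theorem measureLeft_restrict_Ioi (h₁ : 2 * φ < β) (h₂ : β < 4) :
    (measureLeft β).restrict (Ioi 0) = 0 := by
  obtain ⟨-, hc₃b₂, hb₂, -⟩ := breakpoints_lt h₁ h₂
  simp only [measureLeft, Measure.restrict_add, Measure.restrict_smul,
    intervalMeasure.restrict_Ioi_of_le (hc₃b₂.trans hb₂).le,
    intervalMeasure.restrict_Ioi_of_le hb₂.le, intervalMeasure.restrict_Ioi_of_le le_rfl,
    smul_zero, add_zero]

theorem measureRight_restrict_Ioi (h₁ : 2 * φ < β) (h₂ : β < 4) :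
    (measureRight β).restrict (Ioi 0) = measureRight β := by
  obtain ⟨-, -, -, hc₁, hc₁m, hmb₃, hb₃, hc₂, -⟩ := breakpoints_lt h₁ h₂
  simp only [measureRight, Measure.restrict_add, Measure.restrict_smul,
    intervalMeasure.restrict_Ioi_of_ge le_rfl, intervalMeasure.restrict_Ioi_of_ge hc₁.le,
    intervalMeasure.restrict_Ioi_of_ge (hc₁.trans hc₁m |>.trans hmb₃).le,
    intervalMeasure.restrict_Ioi_of_ge zero_le_two,
    intervalMeasure.restrict_Ioi_of_ge (zero_le_two.trans hc₂.le)]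

theorem invariantMeasure_real_univ (h₁ : 2 * φ < β) (h₂ : β < 4) :
    (invariantMeasure β).real univ = 8 * φ + 2 := by
  rw [invariantMeasure, measureReal_add_apply, measureLeft_real_univ h₁ h₂,
    measureRight_real_univ h₁ h₂]
  ring

theorem invariantMeasure_real_Ioi (h₁ : 2 * φ < β) (h₂ : β < 4) :
    (invariantMeasure β).real (Ioi 0) = 6 * φ + 2 := by
  rw [← measureReal_restrict_apply_univ, invariantMeasure, Measure.restrict_add,
    measureLeft_restrict_Ioi h₁ h₂, measureRight_restrict_Ioi h₁ h₂, zero_add,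
    measureRight_real_univ h₁ h₂]

end GoldenPlateau

end

theorem lyapunov_plateau_s_phi (φ β : ℝ) (hφ : φ = (1 + Real.sqrt 5) / 2)
    (hβ₁ : 2 * φ < β) (hβ₂ : β < 4)
    (T : ℝ → ℝ) (hT : T = fun x => if x ≤ 0 then x + 2 else β - φ * x) :
    ∃ μ : Measure ℝ, IsProbabilityMeasure μ ∧ μ.map T = μ ∧ μ ≪ volume ∧
      ∫ x, Real.log |deriv T x| ∂μ = ((3 - φ) / (5 - 2 * φ)) * Real.log φ := by
  obtain rfl : φ = Real.goldenRatio := hφ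
  obtain rfl : T = shiftReflect β Real.goldenRatio := hT
  have hν_univ := GoldenPlateau.invariantMeasure_real_univ hβ₁ hβ₂
  have hν_Ioi := GoldenPlateau.invariantMeasure_real_Ioi hβ₁ hβ₂
  set ν := GoldenPlateau.invariantMeasure β
  have hφ := Real.goldenRatio_pos
  have : NeZero ν := ⟨fun h => by rw [h, measureReal_zero_apply] at hν_univ; linarith⟩
  have hac : (ν univ)⁻¹ • ν ≪ volume :=
    GoldenPlateau.absolutelyContinuous_invariantMeasure.smul_left _
  have hratio : (6 * Real.goldenRatio + 2) / (8 * Real.goldenRatio + 2)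
      = (3 - Real.goldenRatio) / (5 - 2 * Real.goldenRatio) := by
    rw [div_eq_div_iff (by linarith) (by linarith [Real.goldenRatio_lt_two])]
    linear_combination -4 * Real.goldenRatio_sq
  refine ⟨(ν univ)⁻¹ • ν, inferInstance, ?_, hac, ?_⟩
  · rw [Measure.map_smul, GoldenPlateau.map_invariantMeasure hβ₁ hβ₂]
  · rw [shiftReflect.integral_log_abs_deriv _ _ (hac Real.volume_singleton),
      measureReal_ennreal_smul_apply, ENNReal.toReal_inv, ← measureReal_def, hν_univ, hν_Ioi,
      inv_mul_eq_div, hratio]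
end
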